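/- arXiv:1508.07616 — 11 statements merged into one kernel-verified Lean document; each statement's English description precedes it below -/
import Mathlib

section
/- The point E_r = (λ/(d_T R_r), 0, 0, 0, d_T d_V (R_r−1)/(k_r N_r d_I), λ p (R_r−1)/(R_r (d_L+α_r)), d_T (R_r−1)/k_r) is a steady state of the system (7CM), i.e., f(E_r) = 0. -/
/-- The vector field `f` of the model (7CM): state `x = (T, Is, Ls, Vs, Ir, Lr, Vr)`. -/
noncomputable def hivField (lam dT ks kr p mu dI dL αs αr Ns Nr dV : ℝ)
    (x : Fin 7 → ℝ) : Fin 7 → ℝ :=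
  ![lam - dT * x 0 - ks * x 0 * x 3 - kr * x 0 * x 6,
    (1 - p) * (1 - mu) * ks * x 0 * x 3 + αs * x 2 - dI * x 1,
    p * (1 - mu) * ks * x 0 * x 3 - (αs + dL) * x 2,
    Ns * dI * x 1 - dV * x 3,
    (1 - p) * mu * ks * x 0 * x 3 + (1 - p) * kr * x 0 * x 6 + αr * x 5 - dI * x 4,
    p * mu * ks * x 0 * x 3 + p * kr * x 0 * x 6 - (αr + dL) * x 5,
    Nr * dI * x 4 - dV * x 6]

/-- The mutation-dominant point `E_r` is a steady state of (7CM). -/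
theorem Er_is_steady_state
    (lam dT ks kr p mu dI dL αs αr Ns Nr dV Rr : ℝ)
    (hlam : 0 < lam) (hdT : 0 < dT) (hks : 0 < ks) (hkr : 0 < kr)
    (hdI : 0 < dI) (hdL : 0 < dL) (hαs : 0 < αs) (hαr : 0 < αr)
    (hNs : 0 < Ns) (hNr : 0 < Nr) (hdV : 0 < dV)
    (hp : p ∈ Set.Ioo (0 : ℝ) 1) (hmu : mu ∈ Set.Ioo (0 : ℝ) 1)
    (hRr : Rr = lam * kr * Nr * (αr + (1 - p) * dL) / (dT * dV * (dL + αr))) :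
    hivField lam dT ks kr p mu dI dL αs αr Ns Nr dV
      ![lam / (dT * Rr), 0, 0, 0,
        dT * dV * (Rr - 1) / (kr * Nr * dI),
        lam * p * (Rr - 1) / (Rr * (dL + αr)),
        dT * (Rr - 1) / kr] = 0 := by
  obtain ⟨hp0, hp1⟩ := hp
  have hRrpos : 0 < Rr := by
    rw [hRr]
    have h1 : 0 < αr + (1 - p) * dL := by nlinarith
    have h2 : 0 < dT * dV * (dL + αr) := by positivity
    positivity
  have hRrne : Rr ≠ 0 := ne_of_gt hRrpos
  have hkey : Rr * (dT * dV * (dL + αr)) = lam * kr * Nr * (αr + (1 - p) * dL) := by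
    rw [hRr]; field_simp
  have hDne : dL + αr ≠ 0 := by positivity
  have hkrne : kr ≠ 0 := ne_of_gt hkr
  have hNrne : Nr ≠ 0 := ne_of_gt hNr
  have hdIne : dI ≠ 0 := ne_of_gt hdI
  have hdTne : dT ≠ 0 := ne_of_gt hdT
  set T := lam / (dT * Rr) with hT
  set Ir := dT * dV * (Rr - 1) / (kr * Nr * dI) with hIr
  set Lr := lam * p * (Rr - 1) / (Rr * (dL + αr)) with hLr
  set Vr := dT * (Rr - 1) / kr with hVr
  funext i
  fin_cases i
  · show lam - dT * T - ks * T * 0 - kr * T * Vr = 0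
    rw [hT, hVr]; field_simp; ring
  · show (1 - p) * (1 - mu) * ks * T * 0 + αs * 0 - dI * 0 = 0
    ring
  · show p * (1 - mu) * ks * T * 0 - (αs + dL) * 0 = 0
    ring
  · show Ns * dI * 0 - dV * 0 = 0
    ring
  · show (1 - p) * mu * ks * T * 0 + (1 - p) * kr * T * Vr + αr * Lr - dI * Ir = 0
    rw [hT, hVr, hLr, hIr]; field_simp
    linear_combination (-(dT * (Rr - 1))) * hkey
  · show p * mu * ks * T * 0 + p * kr * T * Vr - (αr + dL) * Lr = 0
    rw [hT, hVr, hLr]; field_simp; ring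
  · show Nr * dI * Ir - dV * Vr = 0
    rw [hIr, hVr]; field_simp; ring
end

section
/- Assume σ ≠ 1. Then the point E_c = (λ/(d_T R_c), d_T d_V (σ_c−1)(R_c−1)/(d_I k_s N_s (1−μ)(σ−1)), λ p (σ_c−1)(R_c−1)/(R_s (d_L+α_s)(1−μ)(σ−1)), d_T (σ_c−1)(R_c−1)/(k_s (1−μ)(σ−1)), μ d_T d_V (R_c−1)/(d_I k_r N_r (1−μ)(σ−1)), μ λ p (R_c−1)/(R_r (d_L+α_r)(1−μ)(σ−1)), μ d_T (R_c−1)/(k_r (1−μ)(σ−1))) is a steady state of the system (7CM), i.e., f(E_c) = 0. -/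
set_option maxHeartbeats 4000000
set_option maxRecDepth 8000


/-- The coexistence point `E_c` is a steady state of (7CM). -/
theorem Ec_is_steady_state
    (lam dT ks kr p mu dI dL αs αr Ns Nr dV Rr Rs Rc σ σc : ℝ)
    (hlam : 0 < lam) (hdT : 0 < dT) (hks : 0 < ks) (hkr : 0 < kr)
    (hdI : 0 < dI) (hdL : 0 < dL) (hαs : 0 < αs) (hαr : 0 < αr)
    (hNs : 0 < Ns) (hNr : 0 < Nr) (hdV : 0 < dV)
    (hp : p ∈ Set.Ioo (0 : ℝ) 1) (hmu : mu ∈ Set.Ioo (0 : ℝ) 1)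
    (hRr : Rr = lam * kr * Nr * (αr + (1 - p) * dL) / (dT * dV * (dL + αr)))
    (hRs : Rs = lam * ks * Ns * (αs + (1 - p) * dL) / (dT * dV * (dL + αs)))
    (hRc : Rc = (1 - mu) * Rs) (hσ : σ = Rs / Rr) (hσc : σc = (1 - mu) * σ)
    (hσ1 : σ ≠ 1) :
    hivField lam dT ks kr p mu dI dL αs αr Ns Nr dV
      ![lam / (dT * Rc),
        dT * dV * (σc - 1) * (Rc - 1) / (dI * ks * Ns * (1 - mu) * (σ - 1)),
        lam * p * (σc - 1) * (Rc - 1) / (Rs * (dL + αs) * (1 - mu) * (σ - 1)),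
        dT * (σc - 1) * (Rc - 1) / (ks * (1 - mu) * (σ - 1)),
        mu * dT * dV * (Rc - 1) / (dI * kr * Nr * (1 - mu) * (σ - 1)),
        mu * lam * p * (Rc - 1) / (Rr * (dL + αr) * (1 - mu) * (σ - 1)),
        mu * dT * (Rc - 1) / (kr * (1 - mu) * (σ - 1))] = 0 := by
  obtain ⟨hp0, hp1⟩ := hp
  obtain ⟨hmu0, hmu1⟩ := hmu
  have hmu' : (1:ℝ) - mu ≠ 0 := by linarith
  have hnum_s_pos : 0 < αs + (1 - p) * dL := by nlinarith
  have hnum_r_pos : 0 < αr + (1 - p) * dL := by nlinarith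
  have hRspos : 0 < Rs := by
    rw [hRs]
    exact div_pos (mul_pos (mul_pos (mul_pos hlam hks) hNs) hnum_s_pos) (by positivity)
  have hRrpos : 0 < Rr := by
    rw [hRr]
    exact div_pos (mul_pos (mul_pos (mul_pos hlam hkr) hNr) hnum_r_pos) (by positivity)
  have hRs' : Rs ≠ 0 := ne_of_gt hRspos
  have hRr' : Rr ≠ 0 := ne_of_gt hRrpos
  have hσpos : 0 < σ := by rw [hσ]; positivity
  have hσ' : σ ≠ 0 := ne_of_gt hσpos
  have hσ1' : σ - 1 ≠ 0 := sub_ne_zero.mpr hσ1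
  have hαsdL : dL + αs ≠ 0 := by positivity
  have hαrdL : dL + αr ≠ 0 := by positivity
  have hdT' : dT ≠ 0 := ne_of_gt hdT
  have hks' : ks ≠ 0 := ne_of_gt hks
  have hkr' : kr ≠ 0 := ne_of_gt hkr
  have hdI' : dI ≠ 0 := ne_of_gt hdI
  have hNs' : Ns ≠ 0 := ne_of_gt hNs
  have hNr' : Nr ≠ 0 := ne_of_gt hNr
  have hσRr : Rs = σ * Rr := by rw [hσ]; field_simp
  have hKey_s : σ * Rr * (dT * dV * (dL + αs)) = lam * ks * Ns * (αs + (1 - p) * dL) := by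
    rw [← hσRr, hRs]; field_simp
  have hKey_r : Rr * (dT * dV * (dL + αr)) = lam * kr * Nr * (αr + (1 - p) * dL) := by
    rw [hRr]; field_simp
  clear hRs hRr hσ hσ1
  subst hσc hRc hσRr
  have eq0 : lam - dT * (lam / (dT * ((1 - mu) * (σ * Rr)))) - ks * (lam / (dT * ((1 - mu) * (σ * Rr)))) * (dT * ((1 - mu) * σ - 1) * ((1 - mu) * (σ * Rr) - 1) / (ks * (1 - mu) * (σ - 1))) - kr * (lam / (dT * ((1 - mu) * (σ * Rr)))) * (mu * dT * ((1 - mu) * (σ * Rr) - 1) / (kr * (1 - mu) * (σ - 1))) = 0 := by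
    field_simp
    ring
  have eq1 : (1 - p) * (1 - mu) * ks * (lam / (dT * ((1 - mu) * (σ * Rr)))) * (dT * ((1 - mu) * σ - 1) * ((1 - mu) * (σ * Rr) - 1) / (ks * (1 - mu) * (σ - 1))) + αs * (lam * p * ((1 - mu) * σ - 1) * ((1 - mu) * (σ * Rr) - 1) / (σ * Rr * (dL + αs) * (1 - mu) * (σ - 1))) - dI * (dT * dV * ((1 - mu) * σ - 1) * ((1 - mu) * (σ * Rr) - 1) / (dI * ks * Ns * (1 - mu) * (σ - 1))) = 0 := by
    field_simp
    have hsn := hnum_s_pos.ne'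
    have hl : lam = σ * Rr * (dT * dV * (dL + αs)) / (ks * Ns * (αs + (1 - p) * dL)) := by
      rw [eq_div_iff (mul_pos (mul_pos hks hNs) hnum_s_pos).ne', hKey_s]; ring
    rw [hl]
    field_simp
    ring
  have eq2 : p * (1 - mu) * ks * (lam / (dT * ((1 - mu) * (σ * Rr)))) * (dT * ((1 - mu) * σ - 1) * ((1 - mu) * (σ * Rr) - 1) / (ks * (1 - mu) * (σ - 1))) - (αs + dL) * (lam * p * ((1 - mu) * σ - 1) * ((1 - mu) * (σ * Rr) - 1) / (σ * Rr * (dL + αs) * (1 - mu) * (σ - 1))) = 0 := by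
    field_simp
    ring
  have eq3 : Ns * dI * (dT * dV * ((1 - mu) * σ - 1) * ((1 - mu) * (σ * Rr) - 1) / (dI * ks * Ns * (1 - mu) * (σ - 1))) - dV * (dT * ((1 - mu) * σ - 1) * ((1 - mu) * (σ * Rr) - 1) / (ks * (1 - mu) * (σ - 1))) = 0 := by
    field_simp
    ring
  have eq4 : (1 - p) * mu * ks * (lam / (dT * ((1 - mu) * (σ * Rr)))) * (dT * ((1 - mu) * σ - 1) * ((1 - mu) * (σ * Rr) - 1) / (ks * (1 - mu) * (σ - 1))) + (1 - p) * kr * (lam / (dT * ((1 - mu) * (σ * Rr)))) * (mu * dT * ((1 - mu) * (σ * Rr) - 1) / (kr * (1 - mu) * (σ - 1))) + αr * (mu * lam * p * ((1 - mu) * (σ * Rr) - 1) / (Rr * (dL + αr) * (1 - mu) * (σ - 1))) - dI * (mu * dT * dV * ((1 - mu) * (σ * Rr) - 1) / (dI * kr * Nr * (1 - mu) * (σ - 1))) = 0 := by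
    have h12 : (1 - p) * mu * ks * (lam / (dT * ((1 - mu) * (σ * Rr)))) * (dT * ((1 - mu) * σ - 1) * ((1 - mu) * (σ * Rr) - 1) / (ks * (1 - mu) * (σ - 1))) + (1 - p) * kr * (lam / (dT * ((1 - mu) * (σ * Rr)))) * (mu * dT * ((1 - mu) * (σ * Rr) - 1) / (kr * (1 - mu) * (σ - 1)))
        = (1 - p) * mu * lam * ((1 - mu) * (σ * Rr) - 1) / (Rr * (1 - mu) * (σ - 1)) := by
      field_simp
      ring
    rw [h12]
    field_simp
    have hrn := hnum_r_pos.ne'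
    have hl : lam = Rr * (dT * dV * (dL + αr)) / (kr * Nr * (αr + (1 - p) * dL)) := by
      rw [eq_div_iff (mul_pos (mul_pos hkr hNr) hnum_r_pos).ne', hKey_r]; ring
    rw [hl]
    field_simp
    ring
  have eq5 : p * mu * ks * (lam / (dT * ((1 - mu) * (σ * Rr)))) * (dT * ((1 - mu) * σ - 1) * ((1 - mu) * (σ * Rr) - 1) / (ks * (1 - mu) * (σ - 1))) + p * kr * (lam / (dT * ((1 - mu) * (σ * Rr)))) * (mu * dT * ((1 - mu) * (σ * Rr) - 1) / (kr * (1 - mu) * (σ - 1))) - (αr + dL) * (mu * lam * p * ((1 - mu) * (σ * Rr) - 1) / (Rr * (dL + αr) * (1 - mu) * (σ - 1))) = 0 := by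
    field_simp
    ring
  have eq6 : Nr * dI * (mu * dT * dV * ((1 - mu) * (σ * Rr) - 1) / (dI * kr * Nr * (1 - mu) * (σ - 1))) - dV * (mu * dT * ((1 - mu) * (σ * Rr) - 1) / (kr * (1 - mu) * (σ - 1))) = 0 := by
    field_simp
    ring
  funext i
  fin_cases i
  · exact eq0
  · exact eq1
  · exact eq2
  · exact eq3
  · exact eq4
  · exact eq5
  · exact eq6
end

section
/- Assume σ ≠ 1. Then the system (7CM) has exactly three steady states: if x ∈ ℝ^7 satisfies f(x) = 0, then x = E_0 or x = E_r or x = E_c, where E_0 = (λ/d_T, 0, 0, 0, 0, 0, 0), E_r = (λ/(d_T R_r), 0, 0, 0, d_T d_V (R_r−1)/(k_r N_r d_I), λ p (R_r−1)/(R_r (d_L+α_r)), d_T (R_r−1)/k_r), and E_c = (λ/(d_T R_c), d_T d_V (σ_c−1)(R_c−1)/(d_I k_s N_s (1−μ)(σ−1)), λ p (σ_c−1)(R_c−1)/(R_s (d_L+α_s)(1−μ)(σ−1)), d_T (σ_c−1)(R_c−1)/(k_s (1−μ)(σ−1)), μ d_T d_V (R_c−1)/(d_I k_r N_r (1−μ)(σ−1)),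 μ λ p (R_c−1)/(R_r (d_L+α_r)(1−μ)(σ−1)), μ d_T (R_c−1)/(k_r (1−μ)(σ−1))). -/
/-- The system (7CM) has exactly three steady states: `E_0`, `E_r`, and `E_c`. -/
theorem steady_states_classification
    (lam dT ks kr p mu dI dL αs αr Ns Nr dV Rr Rs Rc σ σc : ℝ)
    (hlam : 0 < lam) (hdT : 0 < dT) (hks : 0 < ks) (hkr : 0 < kr)
    (hdI : 0 < dI) (hdL : 0 < dL) (hαs : 0 < αs) (hαr : 0 < αr)
    (hNs : 0 < Ns) (hNr : 0 < Nr) (hdV : 0 < dV)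
    (hp : p ∈ Set.Ioo (0 : ℝ) 1) (hmu : mu ∈ Set.Ioo (0 : ℝ) 1)
    (hRr : Rr = lam * kr * Nr * (αr + (1 - p) * dL) / (dT * dV * (dL + αr)))
    (hRs : Rs = lam * ks * Ns * (αs + (1 - p) * dL) / (dT * dV * (dL + αs)))
    (hRc : Rc = (1 - mu) * Rs) (hσ : σ = Rs / Rr) (hσc : σc = (1 - mu) * σ)
    (hσ1 : σ ≠ 1) :
    ∀ x : Fin 7 → ℝ, hivField lam dT ks kr p mu dI dL αs αr Ns Nr dV x = 0 →
      x = ![lam / dT, 0, 0, 0, 0, 0, 0] ∨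
      x = ![lam / (dT * Rr), 0, 0, 0,
        dT * dV * (Rr - 1) / (kr * Nr * dI),
        lam * p * (Rr - 1) / (Rr * (dL + αr)),
        dT * (Rr - 1) / kr] ∨
      x = ![lam / (dT * Rc),
        dT * dV * (σc - 1) * (Rc - 1) / (dI * ks * Ns * (1 - mu) * (σ - 1)),
        lam * p * (σc - 1) * (Rc - 1) / (Rs * (dL + αs) * (1 - mu) * (σ - 1)),
        dT * (σc - 1) * (Rc - 1) / (ks * (1 - mu) * (σ - 1)),
        mu * dT * dV * (Rc - 1) / (dI * kr * Nr * (1 - mu) * (σ - 1)),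
        mu * lam * p * (Rc - 1) / (Rr * (dL + αr) * (1 - mu) * (σ - 1)),
        mu * dT * (Rc - 1) / (kr * (1 - mu) * (σ - 1))] := by
  intro x hx
  obtain ⟨hp0, hp1⟩ := hp
  obtain ⟨hmu0, hmu1⟩ := hmu
  have h1p : (0:ℝ) < 1 - p := by linarith
  have h1mu : (0:ℝ) < 1 - mu := by linarith
  have hRr0 : 0 < Rr := by rw [hRr]; positivity
  have hRs0 : 0 < Rs := by rw [hRs]; positivity
  have hRc0 : 0 < Rc := by rw [hRc]; positivity
  have hσ1' : σ - 1 ≠ 0 := sub_ne_zero.mpr hσ1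
  have hRrm : Rr * (dT * dV * (dL + αr)) = lam * kr * Nr * (αr + (1 - p) * dL) := by
    rw [hRr]; exact div_mul_cancel₀ _ (by positivity)
  have hRsm : Rs * (dT * dV * (dL + αs)) = lam * ks * Ns * (αs + (1 - p) * dL) := by
    rw [hRs]; exact div_mul_cancel₀ _ (by positivity)
  have hσcm : σc * Rr = Rc := by
    rw [hσc, hσ, hRc, mul_assoc, div_mul_cancel₀ _ hRr0.ne']
  have h0 : lam - dT * x 0 - ks * x 0 * x 3 - kr * x 0 * x 6 = 0 := congrFun hx 0
  have h1 : (1 - p) * (1 - mu) * ks * x 0 * x 3 + αs * x 2 - dI * x 1 = 0 := congrFun hx 1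
  have h2 : p * (1 - mu) * ks * x 0 * x 3 - (αs + dL) * x 2 = 0 := congrFun hx 2
  have h3 : Ns * dI * x 1 - dV * x 3 = 0 := congrFun hx 3
  have h4 : (1 - p) * mu * ks * x 0 * x 3 + (1 - p) * kr * x 0 * x 6 + αr * x 5 - dI * x 4 = 0 := congrFun hx 4
  have h5 : p * mu * ks * x 0 * x 3 + p * kr * x 0 * x 6 - (αr + dL) * x 5 = 0 := congrFun hx 5
  have h6 : Nr * dI * x 4 - dV * x 6 = 0 := congrFun hx 6
  have key_s : dV * x 3 * (αs + dL) = Ns * (αs + (1 - p) * dL) * (1 - mu) * ks * x 0 * x 3 := by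
    linear_combination (-(Ns * (αs + dL))) * h1 - Ns * αs * h2 - (αs + dL) * h3
  have key_r : dV * x 6 * (αr + dL)
      = Nr * (αr + (1 - p) * dL) * x 0 * (mu * ks * x 3 + kr * x 6) := by
    linear_combination (-(Nr * (αr + dL))) * h4 - Nr * αr * h5 - (αr + dL) * h6
  rcases eq_or_ne (x 3) 0 with hVs | hVs
  · -- susceptible virus absent
    have hx2 : x 2 = 0 := by
      have h : (αs + dL) * x 2 = 0 := by linear_combination -h2 + p * (1 - mu) * ks * x 0 * hVs
      exact (mul_eq_zero.mp h).resolve_left (by positivity)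
    have hx1 : x 1 = 0 := by
      have h : Ns * dI * x 1 = 0 := by linear_combination h3 + dV * hVs
      exact (mul_eq_zero.mp h).resolve_left (by positivity)
    have hkr6 : x 6 * (dV * (αr + dL) - Nr * (αr + (1 - p) * dL) * kr * x 0) = 0 := by
      linear_combination key_r + Nr * (αr + (1 - p) * dL) * x 0 * mu * ks * hVs
    rcases mul_eq_zero.mp hkr6 with hVr | hTr
    · -- E_0
      have hx5 : x 5 = 0 := by
        have h : (αr + dL) * x 5 = 0 := by
          linear_combination -h5 + p * mu * ks * x 0 * hVs + p * kr * x 0 * hVr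
        exact (mul_eq_zero.mp h).resolve_left (by positivity)
      have hx4 : x 4 = 0 := by
        have h : Nr * dI * x 4 = 0 := by linear_combination h6 + dV * hVr
        exact (mul_eq_zero.mp h).resolve_left (by positivity)
      left
      funext i
      fin_cases i
      · show x 0 = lam / dT
        rw [eq_div_iff hdT.ne']
        linear_combination -h0 - ks * x 0 * hVs - kr * x 0 * hVr
      · exact hx1
      · exact hx2
      · exact hVs
      · exact hx4
      · exact hx5
      · exact hVr
    · -- E_r
      have hTr : dV * (αr + dL) = Nr * (αr + (1 - p) * dL) * kr * x 0 := by
        linear_combination hTr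
      have hx0m : dT * Rr * x 0 = lam := by
        have h := mul_right_cancel₀ (b := dT * dV * (dL + αr)) (by positivity)
          (show dT * Rr * x 0 * (dT * dV * (dL + αr)) = lam * (dT * dV * (dL + αr)) by
            linear_combination dT * x 0 * hRrm - lam * dT * hTr)
        exact h
      have hx0ne : x 0 ≠ 0 := by
        intro h
        rw [h, mul_zero] at hx0m
        exact hlam.ne hx0m
      have hVr6r : kr * x 6 = dT * (Rr - 1) := by
        have h : x 0 * (kr * x 6) = x 0 * (dT * (Rr - 1)) := by
          linear_combination -h0 - hx0m - ks * x 0 * hVs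
        exact mul_left_cancel₀ hx0ne h
      right; left
      funext i
      fin_cases i
      · show x 0 = lam / (dT * Rr)
        rw [eq_div_iff (by positivity)]
        linear_combination hx0m
      · exact hx1
      · exact hx2
      · exact hVs
      · show x 4 = dT * dV * (Rr - 1) / (kr * Nr * dI)
        rw [eq_div_iff (by positivity)]
        linear_combination kr * h6 + dV * hVr6r
      · show x 5 = lam * p * (Rr - 1) / (Rr * (dL + αr))
        rw [eq_div_iff (by positivity)]
        linear_combination -Rr * h5 + Rr * p * mu * ks * x 0 * hVs + Rr * p * x 0 * hVr6r
          + p * (Rr - 1) * hx0m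
      · show x 6 = dT * (Rr - 1) / kr
        rw [eq_div_iff hkr.ne']
        linear_combination hVr6r
  · -- E_c
    have hT : dV * (αs + dL) = Ns * (αs + (1 - p) * dL) * (1 - mu) * ks * x 0 := by
      refine mul_right_cancel₀ hVs ?_
      linear_combination key_s
    have hx0m : dT * Rc * x 0 = lam := by
      rw [hRc]
      refine mul_right_cancel₀ (b := dT * dV * (dL + αs)) (by positivity) ?_
      linear_combination dT * (1 - mu) * x 0 * hRsm - lam * dT * hT
    have hx0ne : x 0 ≠ 0 := by
      intro h
      rw [h, mul_zero] at hx0m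
      exact hlam.ne hx0m
    have hB : kr * x 6 * (Rc - Rr) = Rr * mu * ks * x 3 := by
      refine mul_right_cancel₀ (b := dV * (dL + αr) * lam) (by positivity) ?_
      linear_combination lam * kr * Rc * key_r
        - Rc * x 0 * (mu * ks * x 3 + kr * x 6) * hRrm
        + Rr * dV * (dL + αr) * (mu * ks * x 3 + kr * x 6) * hx0m
    have hBσ : kr * x 6 * (σc - 1) = mu * ks * x 3 := by
      refine mul_right_cancel₀ hRr0.ne' ?_
      linear_combination kr * x 6 * hσcm + hB
    have hσc1 : σc - 1 ≠ 0 := by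
      intro h
      apply hVs
      have h0' : mu * ks * x 3 = 0 := by linear_combination -hBσ + kr * x 6 * h
      exact (mul_eq_zero.mp h0').resolve_left (by positivity)
    have hA : ks * x 3 + kr * x 6 = dT * (Rc - 1) := by
      refine mul_left_cancel₀ hx0ne ?_
      linear_combination -h0 - hx0m
    have hVs3 : ks * x 3 * ((1 - mu) * (σ - 1)) = dT * (Rc - 1) * (σc - 1) := by
      linear_combination (σc - 1) * hA - hBσ - ks * x 3 * hσc
    have hVr6 : kr * x 6 * ((1 - mu) * (σ - 1)) = mu * dT * (Rc - 1) := by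
      refine mul_right_cancel₀ hσc1 ?_
      linear_combination mu * hVs3 + (1 - mu) * (σ - 1) * hBσ
    right; right
    funext i
    fin_cases i
    · show x 0 = lam / (dT * Rc)
      rw [eq_div_iff (by positivity)]
      linear_combination hx0m
    · show x 1 = dT * dV * (σc - 1) * (Rc - 1) / (dI * ks * Ns * (1 - mu) * (σ - 1))
      rw [eq_div_iff (mul_ne_zero (by positivity) hσ1')]
      linear_combination ks * (1 - mu) * (σ - 1) * h3 + dV * hVs3
    · show x 2 = lam * p * (σc - 1) * (Rc - 1) / (Rs * (dL + αs) * (1 - mu) * (σ - 1))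
      rw [eq_div_iff (mul_ne_zero (by positivity) hσ1')]
      linear_combination -x 2 * (dL + αs) * (σ - 1) * hRc - Rc * (σ - 1) * h2
        + p * x 0 * Rc * hVs3 + p * (Rc - 1) * (σc - 1) * hx0m
    · show x 3 = dT * (σc - 1) * (Rc - 1) / (ks * (1 - mu) * (σ - 1))
      rw [eq_div_iff (mul_ne_zero (by positivity) hσ1')]
      linear_combination hVs3
    · show x 4 = mu * dT * dV * (Rc - 1) / (dI * kr * Nr * (1 - mu) * (σ - 1))
      rw [eq_div_iff (mul_ne_zero (by positivity) hσ1')]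
      linear_combination kr * (1 - mu) * (σ - 1) * h6 + dV * hVr6
    · show x 5 = mu * lam * p * (Rc - 1) / (Rr * (dL + αr) * (1 - mu) * (σ - 1))
      rw [eq_div_iff (mul_ne_zero (by positivity) hσ1')]
      linear_combination (-(Rr * (1 - mu) * (σ - 1))) * h5 + Rr * p * x 0 * mu * hVs3
        + Rr * p * x 0 * hVr6 + mu * p * (Rc - 1) * dT * x 0 * hσcm + mu * p * (Rc - 1) * hx0m
    · show x 6 = mu * dT * (Rc - 1) / (kr * (1 - mu) * (σ - 1))
      rw [eq_div_iff (mul_ne_zero (by positivity) hσ1')]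
      linear_combination hVr6
end

section
/- If R_c > 1 and σ_c > 1, then σ > 1 and every component of the coexistence steady state E_c = (λ/(d_T R_c), d_T d_V (σ_c−1)(R_c−1)/(d_I k_s N_s (1−μ)(σ−1)), λ p (σ_c−1)(R_c−1)/(R_s (d_L+α_s)(1−μ)(σ−1)), d_T (σ_c−1)(R_c−1)/(k_s (1−μ)(σ−1)), μ d_T d_V (R_c−1)/(d_I k_r N_r (1−μ)(σ−1)), μ λ p (R_c−1)/(R_r (d_L+α_r)(1−μ)(σ−1)), μ d_T (R_c−1)/(k_r (1−μ)(σ−1))) is strictly positive. -/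
/-- If `R_c > 1` and `σ_c > 1`, then `σ > 1` and every component of the coexistence
steady state `E_c` is strictly positive. -/
theorem Ec_positive
    (lam dT ks kr p mu dI dL αs αr Ns Nr dV Rr Rs Rc σ σc : ℝ)
    (hlam : 0 < lam) (hdT : 0 < dT) (hks : 0 < ks) (hkr : 0 < kr)
    (hdI : 0 < dI) (hdL : 0 < dL) (hαs : 0 < αs) (hαr : 0 < αr)
    (hNs : 0 < Ns) (hNr : 0 < Nr) (hdV : 0 < dV)
    (hp : p ∈ Set.Ioo (0 : ℝ) 1) (hmu : mu ∈ Set.Ioo (0 : ℝ) 1)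
    (hRr : Rr = lam * kr * Nr * (αr + (1 - p) * dL) / (dT * dV * (dL + αr)))
    (hRs : Rs = lam * ks * Ns * (αs + (1 - p) * dL) / (dT * dV * (dL + αs)))
    (hRc : Rc = (1 - mu) * Rs) (hσ : σ = Rs / Rr) (hσc : σc = (1 - mu) * σ)
    (Ec : Fin 7 → ℝ)
    (hEc : Ec = ![lam / (dT * Rc),
        dT * dV * (σc - 1) * (Rc - 1) / (dI * ks * Ns * (1 - mu) * (σ - 1)),
        lam * p * (σc - 1) * (Rc - 1) / (Rs * (dL + αs) * (1 - mu) * (σ - 1)),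
        dT * (σc - 1) * (Rc - 1) / (ks * (1 - mu) * (σ - 1)),
        mu * dT * dV * (Rc - 1) / (dI * kr * Nr * (1 - mu) * (σ - 1)),
        mu * lam * p * (Rc - 1) / (Rr * (dL + αr) * (1 - mu) * (σ - 1)),
        mu * dT * (Rc - 1) / (kr * (1 - mu) * (σ - 1))])
    (hRc1 : 1 < Rc) (hσc1 : 1 < σc) :
    1 < σ ∧ ∀ i, 0 < Ec i := by
  obtain ⟨hp0, hp1⟩ := hp
  obtain ⟨hmu0, hmu1⟩ := hmu
  have h1mu : 0 < 1 - mu := by linarith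
  have hσ1 : 1 < σ := by
    nlinarith [mul_pos h1mu (by linarith : (0:ℝ) < σc)]
  have h1p : 0 < 1 - p := by linarith
  have hAs : 0 < αs + (1 - p) * dL := by positivity
  have hAr : 0 < αr + (1 - p) * dL := by positivity
  have hRs0 : 0 < Rs := by
    rw [hRs]; positivity
  have hRr0 : 0 < Rr := by
    rw [hRr]; positivity
  have hRc0 : 0 < Rc := by linarith
  have hσm : 0 < σ - 1 := by linarith
  have hσcm : 0 < σc - 1 := by linarith
  have hRcm : 0 < Rc - 1 := by linarith
  refine ⟨hσ1, fun i => ?_⟩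
  subst hEc
  have h0 : 0 < lam / (dT * Rc) := by positivity
  have h1 : 0 < dT * dV * (σc - 1) * (Rc - 1) / (dI * ks * Ns * (1 - mu) * (σ - 1)) := by
    positivity
  have h2 : 0 < lam * p * (σc - 1) * (Rc - 1) / (Rs * (dL + αs) * (1 - mu) * (σ - 1)) := by
    positivity
  have h3 : 0 < dT * (σc - 1) * (Rc - 1) / (ks * (1 - mu) * (σ - 1)) := by positivity
  have h4 : 0 < mu * dT * dV * (Rc - 1) / (dI * kr * Nr * (1 - mu) * (σ - 1)) := by positivity
  have h5 : 0 < mu * lam * p * (Rc - 1) / (Rr * (dL + αr) * (1 - mu) * (σ - 1)) := by positivity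
  have h6 : 0 < mu * dT * (Rc - 1) / (kr * (1 - mu) * (σ - 1)) := by positivity
  fin_cases i
  · exact h0
  · exact h1
  · exact h2
  · exact h3
  · exact h4
  · exact h5
  · exact h6
end

section
/- Let J be the Jacobian matrix of the vector field f of (7CM) evaluated at the infection-free steady state E_0 = (λ/d_T, 0, 0, 0, 0, 0, 0). Then for every complex number X, d_T^6 · det(X·I − J) = (X + d_T) · q_r(d_T X) · q_s(d_T X). In particular, X is an eigenvalue of J if and only if X = −d_T or q_r(d_T X) = 0 or q_s(d_T X) = 0. -/
open Matrix

@[simp] lemma vec7_five {α : Type*} (a b c d e f g : α) : ![a,b,c,d,e,f,g] (5 : Fin 7) = f := rfl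
@[simp] lemma vec7_six {α : Type*} (a b c d e f g : α) : ![a,b,c,d,e,f,g] (6 : Fin 7) = g := rfl

/-- Determinant of the characteristic matrix of a sparse 7×7 real matrix with the
block-triangular pattern of the Jacobian of (7CM) at `E_0`. -/
lemma det7E (X : ℂ) (m00 m03 m06 m11 m12 m13 m22 m23 m31 m33 m43 m44 m45 m46 m53 m55 m56 m64 m66 : ℝ) :
    (X • (1 : Matrix (Fin 7) (Fin 7) ℂ) -
      (!![m00, 0, 0, m03, 0, 0, m06;
          0, m11, m12, m13, 0, 0, 0;
          0, 0, m22, m23, 0, 0, 0;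
          0, m31, 0, m33, 0, 0, 0;
          0, 0, 0, m43, m44, m45, m46;
          0, 0, 0, m53, 0, m55, m56;
          0, 0, 0, 0, m64, 0, m66] : Matrix (Fin 7) (Fin 7) ℝ).map (fun r => (r : ℂ))).det
    = (X - (m00 : ℂ)) *
      ((X - (m11 : ℂ)) * (X - (m22 : ℂ)) * (X - (m33 : ℂ))
        - (m12 : ℂ) * (m23 : ℂ) * (m31 : ℂ) - (m13 : ℂ) * (X - (m22 : ℂ)) * (m31 : ℂ)) *
      ((X - (m44 : ℂ)) * (X - (m55 : ℂ)) * (X - (m66 : ℂ))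
        - (m45 : ℂ) * (m56 : ℂ) * (m64 : ℂ) - (m46 : ℂ) * (X - (m55 : ℂ)) * (m64 : ℂ)) := by
  have h7 : (X • (1 : Matrix (Fin 7) (Fin 7) ℂ) -
      (!![m00, 0, 0, m03, 0, 0, m06;
          0, m11, m12, m13, 0, 0, 0;
          0, 0, m22, m23, 0, 0, 0;
          0, m31, 0, m33, 0, 0, 0;
          0, 0, 0, m43, m44, m45, m46;
          0, 0, 0, m53, 0, m55, m56;
          0, 0, 0, 0, m64, 0, m66] : Matrix (Fin 7) (Fin 7) ℝ).map (fun r => (r : ℂ)))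
      = (Matrix.fromBlocks !![X*1 - ((m00:ℝ):ℂ)]
          !![X*0 - ((0:ℝ):ℂ), X*0 - ((0:ℝ):ℂ), X*0 - ((m03:ℝ):ℂ), X*0 - ((0:ℝ):ℂ),
             X*0 - ((0:ℝ):ℂ), X*0 - ((m06:ℝ):ℂ)] 0
          (!![X*1-((m11:ℝ):ℂ), X*0-((m12:ℝ):ℂ), X*0-((m13:ℝ):ℂ), X*0-((0:ℝ):ℂ), X*0-((0:ℝ):ℂ), X*0-((0:ℝ):ℂ);
              X*0-((0:ℝ):ℂ), X*1-((m22:ℝ):ℂ), X*0-((m23:ℝ):ℂ), X*0-((0:ℝ):ℂ), X*0-((0:ℝ):ℂ), X*0-((0:ℝ):ℂ);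
              X*0-((m31:ℝ):ℂ), X*0-((0:ℝ):ℂ), X*1-((m33:ℝ):ℂ), X*0-((0:ℝ):ℂ), X*0-((0:ℝ):ℂ), X*0-((0:ℝ):ℂ);
              X*0-((0:ℝ):ℂ), X*0-((0:ℝ):ℂ), X*0-((m43:ℝ):ℂ), X*1-((m44:ℝ):ℂ), X*0-((m45:ℝ):ℂ), X*0-((m46:ℝ):ℂ);
              X*0-((0:ℝ):ℂ), X*0-((0:ℝ):ℂ), X*0-((m53:ℝ):ℂ), X*0-((0:ℝ):ℂ), X*1-((m55:ℝ):ℂ), X*0-((m56:ℝ):ℂ);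
              X*0-((0:ℝ):ℂ), X*0-((0:ℝ):ℂ), X*0-((0:ℝ):ℂ), X*0-((m64:ℝ):ℂ), X*0-((0:ℝ):ℂ), X*1-((m66:ℝ):ℂ)])).submatrix
          finSumFinEquiv.symm finSumFinEquiv.symm := by
    ext i j
    fin_cases i <;> fin_cases j <;>
      (first | rfl | (show X * 0 - ((0:ℝ):ℂ) = 0; norm_num))
  have h6 : (!![X*1-((m11:ℝ):ℂ), X*0-((m12:ℝ):ℂ), X*0-((m13:ℝ):ℂ), X*0-((0:ℝ):ℂ), X*0-((0:ℝ):ℂ), X*0-((0:ℝ):ℂ);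
              X*0-((0:ℝ):ℂ), X*1-((m22:ℝ):ℂ), X*0-((m23:ℝ):ℂ), X*0-((0:ℝ):ℂ), X*0-((0:ℝ):ℂ), X*0-((0:ℝ):ℂ);
              X*0-((m31:ℝ):ℂ), X*0-((0:ℝ):ℂ), X*1-((m33:ℝ):ℂ), X*0-((0:ℝ):ℂ), X*0-((0:ℝ):ℂ), X*0-((0:ℝ):ℂ);
              X*0-((0:ℝ):ℂ), X*0-((0:ℝ):ℂ), X*0-((m43:ℝ):ℂ), X*1-((m44:ℝ):ℂ), X*0-((m45:ℝ):ℂ), X*0-((m46:ℝ):ℂ);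
              X*0-((0:ℝ):ℂ), X*0-((0:ℝ):ℂ), X*0-((m53:ℝ):ℂ), X*0-((0:ℝ):ℂ), X*1-((m55:ℝ):ℂ), X*0-((m56:ℝ):ℂ);
              X*0-((0:ℝ):ℂ), X*0-((0:ℝ):ℂ), X*0-((0:ℝ):ℂ), X*0-((m64:ℝ):ℂ), X*0-((0:ℝ):ℂ), X*1-((m66:ℝ):ℂ)]
            : Matrix (Fin 6) (Fin 6) ℂ)
      = (Matrix.fromBlocks
          !![X*1-((m11:ℝ):ℂ), X*0-((m12:ℝ):ℂ), X*0-((m13:ℝ):ℂ);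
             X*0-((0:ℝ):ℂ), X*1-((m22:ℝ):ℂ), X*0-((m23:ℝ):ℂ);
             X*0-((m31:ℝ):ℂ), X*0-((0:ℝ):ℂ), X*1-((m33:ℝ):ℂ)] 0
          !![X*0-((0:ℝ):ℂ), X*0-((0:ℝ):ℂ), X*0-((m43:ℝ):ℂ);
             X*0-((0:ℝ):ℂ), X*0-((0:ℝ):ℂ), X*0-((m53:ℝ):ℂ);
             X*0-((0:ℝ):ℂ), X*0-((0:ℝ):ℂ), X*0-((0:ℝ):ℂ)]
          !![X*1-((m44:ℝ):ℂ), X*0-((m45:ℝ):ℂ), X*0-((m46:ℝ):ℂ);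
             X*0-((0:ℝ):ℂ), X*1-((m55:ℝ):ℂ), X*0-((m56:ℝ):ℂ);
             X*0-((m64:ℝ):ℂ), X*0-((0:ℝ):ℂ), X*1-((m66:ℝ):ℂ)]).submatrix
            finSumFinEquiv.symm finSumFinEquiv.symm := by
    ext i j
    fin_cases i <;> fin_cases j <;>
      (first | rfl | (show X * 0 - ((0:ℝ):ℂ) = 0; norm_num))
  rw [h7, Matrix.det_submatrix_equiv_self, Matrix.det_fromBlocks_zero₂₁, h6,
    Matrix.det_submatrix_equiv_self, Matrix.det_fromBlocks_zero₁₂,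
    Matrix.det_fin_one, Matrix.det_fin_three, Matrix.det_fin_three]
  norm_num
  simp only [Matrix.cons_val_two, Matrix.head_cons, Matrix.tail_cons, Matrix.vecHead, Matrix.cons_val_zero]
  ring

set_option maxHeartbeats 3000000 in
set_option maxRecDepth 20000 in
/-- Factorization of the characteristic polynomial of the Jacobian of (7CM) at the
infection-free steady state `E_0`, and the resulting eigenvalue characterization. -/
theorem charpoly_factorization_at_E0
    (lam dT ks kr p mu dI dL αs αr Ns Nr dV a2 a1 a0 b2 b1 b0 : ℝ)
    (hlam : 0 < lam) (hdT : 0 < dT) (hks : 0 < ks) (hkr : 0 < kr)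
    (hdI : 0 < dI) (hdL : 0 < dL) (hαs : 0 < αs) (hαr : 0 < αr)
    (hNs : 0 < Ns) (hNr : 0 < Nr) (hdV : 0 < dV)
    (hp : p ∈ Set.Ioo (0 : ℝ) 1) (hmu : mu ∈ Set.Ioo (0 : ℝ) 1)
    (ha2 : a2 = dT * (dI + dL + αr + dV))
    (ha1 : a1 = dT ^ 2 * (dV + dI) * (dL + αr) + dT ^ 2 * dV * dI
        - dT * dI * (1 - p) * lam * kr * Nr)
    (ha0 : a0 = dT ^ 3 * dV * dI * (dL + αr)
        - dT ^ 2 * dI * lam * kr * Nr * (αr + (1 - p) * dL))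
    (hb2 : b2 = dT * (dI + dL + αs + dV))
    (hb1 : b1 = dT ^ 2 * (dV + dI) * (dL + αs) + dT ^ 2 * dV * dI
        - dT * dI * (1 - mu) * (1 - p) * lam * ks * Ns)
    (hb0 : b0 = dT ^ 3 * dV * dI * (dL + αs)
        - dT ^ 2 * dI * (1 - mu) * lam * ks * Ns * (αs + (1 - p) * dL))
    (J : Matrix (Fin 7) (Fin 7) ℝ)
    (hJ : ∀ i j, J i j =
      fderiv ℝ (fun y : Fin 7 → ℝ => hivField lam dT ks kr p mu dI dL αs αr Ns Nr dV y i)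
        ![lam / dT, 0, 0, 0, 0, 0, 0] (Pi.single j 1)) :
    (∀ X : ℂ,
      (dT : ℂ) ^ 6 * (X • (1 : Matrix (Fin 7) (Fin 7) ℂ) - J.map (fun r => (r : ℂ))).det
        = (X + (dT : ℂ)) *
          (((dT : ℂ) * X) ^ 3 + (a2 : ℂ) * ((dT : ℂ) * X) ^ 2
            + (a1 : ℂ) * ((dT : ℂ) * X) + (a0 : ℂ)) *
          (((dT : ℂ) * X) ^ 3 + (b2 : ℂ) * ((dT : ℂ) * X) ^ 2
            + (b1 : ℂ) * ((dT : ℂ) * X) + (b0 : ℂ))) ∧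
    (∀ X : ℂ,
      Module.End.HasEigenvalue (Matrix.toLin' (J.map (fun r => (r : ℂ)))) X ↔
        X = -(dT : ℂ) ∨
        ((dT : ℂ) * X) ^ 3 + (a2 : ℂ) * ((dT : ℂ) * X) ^ 2
          + (a1 : ℂ) * ((dT : ℂ) * X) + (a0 : ℂ) = 0 ∨
        ((dT : ℂ) * X) ^ 3 + (b2 : ℂ) * ((dT : ℂ) * X) ^ 2
          + (b1 : ℂ) * ((dT : ℂ) * X) + (b0 : ℂ) = 0) := by
  have hdT0 : (dT : ℝ) ≠ 0 := ne_of_gt hdT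
  -- Step 1: identify the Jacobian matrix explicitly.
  have hJM : J = !![-dT, 0, 0, -(ks*(lam/dT)), 0, 0, -(kr*(lam/dT));
           0, -dI, αs, (1-p)*(1-mu)*ks*(lam/dT), 0, 0, 0;
           0, 0, -(αs+dL), p*(1-mu)*ks*(lam/dT), 0, 0, 0;
           0, Ns*dI, 0, -dV, 0, 0, 0;
           0, 0, 0, (1-p)*mu*ks*(lam/dT), -dI, αr, (1-p)*kr*(lam/dT);
           0, 0, 0, p*mu*ks*(lam/dT), 0, -(αr+dL), p*kr*(lam/dT);
           0, 0, 0, 0, Nr*dI, 0, -dV] := by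
    set x0 : Fin 7 → ℝ := ![lam / dT, 0, 0, 0, 0, 0, 0] with hx0
    have hx00 : x0 0 = lam / dT := rfl
    have hx3 : x0 3 = 0 := rfl
    have hx6 : x0 6 = 0 := rfl
    have hpr : ∀ k : Fin 7, HasFDerivAt (𝕜 := ℝ) (fun y : Fin 7 → ℝ => y k)
        (ContinuousLinearMap.proj k) x0 := fun k => hasFDerivAt_apply k x0
    have h0 : HasFDerivAt (fun y : Fin 7 → ℝ =>
        hivField lam dT ks kr p mu dI dL αs αr Ns Nr dV y 0) _ x0 :=
      (((hasFDerivAt_const lam x0).sub ((hpr 0).const_mul dT)).sub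
        (((hpr 0).const_mul ks).mul (hpr 3))).sub (((hpr 0).const_mul kr).mul (hpr 6))
    have h1 : HasFDerivAt (fun y : Fin 7 → ℝ =>
        hivField lam dT ks kr p mu dI dL αs αr Ns Nr dV y 1) _ x0 :=
      ((((hpr 0).const_mul ((1-p)*(1-mu)*ks)).mul (hpr 3)).add
        ((hpr 2).const_mul αs)).sub ((hpr 1).const_mul dI)
    have h2 : HasFDerivAt (fun y : Fin 7 → ℝ =>
        hivField lam dT ks kr p mu dI dL αs αr Ns Nr dV y 2) _ x0 :=
      (((hpr 0).const_mul (p*(1-mu)*ks)).mul (hpr 3)).sub ((hpr 2).const_mul (αs+dL))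
    have h3 : HasFDerivAt (fun y : Fin 7 → ℝ =>
        hivField lam dT ks kr p mu dI dL αs αr Ns Nr dV y 3) _ x0 :=
      ((hpr 1).const_mul (Ns*dI)).sub ((hpr 3).const_mul dV)
    have h4 : HasFDerivAt (fun y : Fin 7 → ℝ =>
        hivField lam dT ks kr p mu dI dL αs αr Ns Nr dV y 4) _ x0 :=
      (((((hpr 0).const_mul ((1-p)*mu*ks)).mul (hpr 3)).add
        (((hpr 0).const_mul ((1-p)*kr)).mul (hpr 6))).add
        ((hpr 5).const_mul αr)).sub ((hpr 4).const_mul dI)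
    have h5 : HasFDerivAt (fun y : Fin 7 → ℝ =>
        hivField lam dT ks kr p mu dI dL αs αr Ns Nr dV y 5) _ x0 :=
      ((((hpr 0).const_mul (p*mu*ks)).mul (hpr 3)).add
        (((hpr 0).const_mul (p*kr)).mul (hpr 6))).sub ((hpr 5).const_mul (αr+dL))
    have h6 : HasFDerivAt (fun y : Fin 7 → ℝ =>
        hivField lam dT ks kr p mu dI dL αs αr Ns Nr dV y 6) _ x0 :=
      ((hpr 4).const_mul (Nr*dI)).sub ((hpr 6).const_mul dV)
    have E0 : ∀ j, J 0 j =
        !![-dT, 0, 0, -(ks*(lam/dT)), 0, 0, -(kr*(lam/dT));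
             0, -dI, αs, (1-p)*(1-mu)*ks*(lam/dT), 0, 0, 0;
             0, 0, -(αs+dL), p*(1-mu)*ks*(lam/dT), 0, 0, 0;
             0, Ns*dI, 0, -dV, 0, 0, 0;
             0, 0, 0, (1-p)*mu*ks*(lam/dT), -dI, αr, (1-p)*kr*(lam/dT);
             0, 0, 0, p*mu*ks*(lam/dT), 0, -(αr+dL), p*kr*(lam/dT);
             0, 0, 0, 0, Nr*dI, 0, -dV] 0 j := by
      intro j
      rw [hJ, h0.fderiv]
      fin_cases j <;> (simp [hx00, hx3, hx6, Pi.single_apply]; try (first | rfl | exact Or.inl rfl | ring))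
    have E1 : ∀ j, J 1 j =
        !![-dT, 0, 0, -(ks*(lam/dT)), 0, 0, -(kr*(lam/dT));
             0, -dI, αs, (1-p)*(1-mu)*ks*(lam/dT), 0, 0, 0;
             0, 0, -(αs+dL), p*(1-mu)*ks*(lam/dT), 0, 0, 0;
             0, Ns*dI, 0, -dV, 0, 0, 0;
             0, 0, 0, (1-p)*mu*ks*(lam/dT), -dI, αr, (1-p)*kr*(lam/dT);
             0, 0, 0, p*mu*ks*(lam/dT), 0, -(αr+dL), p*kr*(lam/dT);
             0, 0, 0, 0, Nr*dI, 0, -dV] 1 j := by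
      intro j
      rw [hJ, h1.fderiv]
      fin_cases j <;> (simp [hx00, hx3, hx6, Pi.single_apply]; try (first | rfl | exact Or.inl rfl | ring))
    have E2 : ∀ j, J 2 j =
        !![-dT, 0, 0, -(ks*(lam/dT)), 0, 0, -(kr*(lam/dT));
             0, -dI, αs, (1-p)*(1-mu)*ks*(lam/dT), 0, 0, 0;
             0, 0, -(αs+dL), p*(1-mu)*ks*(lam/dT), 0, 0, 0;
             0, Ns*dI, 0, -dV, 0, 0, 0;
             0, 0, 0, (1-p)*mu*ks*(lam/dT), -dI, αr, (1-p)*kr*(lam/dT);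
             0, 0, 0, p*mu*ks*(lam/dT), 0, -(αr+dL), p*kr*(lam/dT);
             0, 0, 0, 0, Nr*dI, 0, -dV] 2 j := by
      intro j
      rw [hJ, h2.fderiv]
      fin_cases j <;> (simp [hx00, hx3, hx6, Pi.single_apply]; try (first | rfl | exact Or.inl rfl | ring))
    have E3 : ∀ j, J 3 j =
        !![-dT, 0, 0, -(ks*(lam/dT)), 0, 0, -(kr*(lam/dT));
             0, -dI, αs, (1-p)*(1-mu)*ks*(lam/dT), 0, 0, 0;
             0, 0, -(αs+dL), p*(1-mu)*ks*(lam/dT), 0, 0, 0;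
             0, Ns*dI, 0, -dV, 0, 0, 0;
             0, 0, 0, (1-p)*mu*ks*(lam/dT), -dI, αr, (1-p)*kr*(lam/dT);
             0, 0, 0, p*mu*ks*(lam/dT), 0, -(αr+dL), p*kr*(lam/dT);
             0, 0, 0, 0, Nr*dI, 0, -dV] 3 j := by
      intro j
      rw [hJ, h3.fderiv]
      fin_cases j <;> (simp [hx00, hx3, hx6, Pi.single_apply]; try (first | rfl | exact Or.inl rfl | ring))
    have E4 : ∀ j, J 4 j =
        !![-dT, 0, 0, -(ks*(lam/dT)), 0, 0, -(kr*(lam/dT));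
             0, -dI, αs, (1-p)*(1-mu)*ks*(lam/dT), 0, 0, 0;
             0, 0, -(αs+dL), p*(1-mu)*ks*(lam/dT), 0, 0, 0;
             0, Ns*dI, 0, -dV, 0, 0, 0;
             0, 0, 0, (1-p)*mu*ks*(lam/dT), -dI, αr, (1-p)*kr*(lam/dT);
             0, 0, 0, p*mu*ks*(lam/dT), 0, -(αr+dL), p*kr*(lam/dT);
             0, 0, 0, 0, Nr*dI, 0, -dV] 4 j := by
      intro j
      rw [hJ, h4.fderiv]
      fin_cases j <;> (simp [hx00, hx3, hx6, Pi.single_apply]; try (first | rfl | exact Or.inl rfl | ring))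
    have E5 : ∀ j, J 5 j =
        !![-dT, 0, 0, -(ks*(lam/dT)), 0, 0, -(kr*(lam/dT));
             0, -dI, αs, (1-p)*(1-mu)*ks*(lam/dT), 0, 0, 0;
             0, 0, -(αs+dL), p*(1-mu)*ks*(lam/dT), 0, 0, 0;
             0, Ns*dI, 0, -dV, 0, 0, 0;
             0, 0, 0, (1-p)*mu*ks*(lam/dT), -dI, αr, (1-p)*kr*(lam/dT);
             0, 0, 0, p*mu*ks*(lam/dT), 0, -(αr+dL), p*kr*(lam/dT);
             0, 0, 0, 0, Nr*dI, 0, -dV] 5 j := by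
      intro j
      rw [hJ, h5.fderiv]
      fin_cases j <;> (simp [hx00, hx3, hx6, Pi.single_apply]; try (first | rfl | exact Or.inl rfl | ring))
    have E6 : ∀ j, J 6 j =
        !![-dT, 0, 0, -(ks*(lam/dT)), 0, 0, -(kr*(lam/dT));
             0, -dI, αs, (1-p)*(1-mu)*ks*(lam/dT), 0, 0, 0;
             0, 0, -(αs+dL), p*(1-mu)*ks*(lam/dT), 0, 0, 0;
             0, Ns*dI, 0, -dV, 0, 0, 0;
             0, 0, 0, (1-p)*mu*ks*(lam/dT), -dI, αr, (1-p)*kr*(lam/dT);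
             0, 0, 0, p*mu*ks*(lam/dT), 0, -(αr+dL), p*kr*(lam/dT);
             0, 0, 0, 0, Nr*dI, 0, -dV] 6 j := by
      intro j
      rw [hJ, h6.fderiv]
      fin_cases j <;> (simp [hx00, hx3, hx6, Pi.single_apply]; try (first | rfl | exact Or.inl rfl | ring))
    ext i j
    fin_cases i
    · exact E0 j
    · exact E1 j
    · exact E2 j
    · exact E3 j
    · exact E4 j
    · exact E5 j
    · exact E6 j
  -- Step 2: compute the determinant.
  have part1 : ∀ X : ℂ,
      (dT : ℂ) ^ 6 * (X • (1 : Matrix (Fin 7) (Fin 7) ℂ) - J.map (fun r => (r : ℂ))).det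
        = (X + (dT : ℂ)) *
          (((dT : ℂ) * X) ^ 3 + (a2 : ℂ) * ((dT : ℂ) * X) ^ 2
            + (a1 : ℂ) * ((dT : ℂ) * X) + (a0 : ℂ)) *
          (((dT : ℂ) * X) ^ 3 + (b2 : ℂ) * ((dT : ℂ) * X) ^ 2
            + (b1 : ℂ) * ((dT : ℂ) * X) + (b0 : ℂ)) := by
    intro X
    rw [hJM, det7E, ha2, ha1, ha0, hb2, hb1, hb0]
    have hdTC : (dT : ℂ) ≠ 0 := by exact_mod_cast hdT0
    push_cast
    field_simp
    ring
  refine ⟨part1, fun X => ?_⟩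
  -- Step 3: eigenvalues.
  have hdTC : (dT : ℂ) ≠ 0 := by exact_mod_cast hdT0
  set A : Matrix (Fin 7) (Fin 7) ℂ := J.map (fun r => (r : ℂ)) with hAdef
  have heig : Module.End.HasEigenvalue (Matrix.toLin' A) X ↔
      (X • (1 : Matrix (Fin 7) (Fin 7) ℂ) - A).det = 0 := by
    rw [Module.End.hasEigenvalue_iff_mem_spectrum]
    have h1 : Matrix.toLin' A = Matrix.toLinAlgEquiv' A := rfl
    rw [h1, AlgEquiv.spectrum_eq, spectrum.mem_iff, Algebra.algebraMap_eq_smul_one,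
      Matrix.isUnit_iff_isUnit_det, isUnit_iff_ne_zero, not_ne_iff]
  rw [heig]
  have hkey := part1 X
  constructor
  · intro h
    have hzz : (X + (dT : ℂ)) *
          (((dT : ℂ) * X) ^ 3 + (a2 : ℂ) * ((dT : ℂ) * X) ^ 2
            + (a1 : ℂ) * ((dT : ℂ) * X) + (a0 : ℂ)) *
          (((dT : ℂ) * X) ^ 3 + (b2 : ℂ) * ((dT : ℂ) * X) ^ 2
            + (b1 : ℂ) * ((dT : ℂ) * X) + (b0 : ℂ)) = 0 := by
      rw [← hkey, h, mul_zero]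
    rcases mul_eq_zero.1 hzz with h12 | h3
    · rcases mul_eq_zero.1 h12 with h1' | h2'
      · exact Or.inl (by linear_combination h1')
      · exact Or.inr (Or.inl h2')
    · exact Or.inr (Or.inr h3)
  · intro h
    have hz : (X + (dT : ℂ)) *
          (((dT : ℂ) * X) ^ 3 + (a2 : ℂ) * ((dT : ℂ) * X) ^ 2
            + (a1 : ℂ) * ((dT : ℂ) * X) + (a0 : ℂ)) *
          (((dT : ℂ) * X) ^ 3 + (b2 : ℂ) * ((dT : ℂ) * X) ^ 2
            + (b1 : ℂ) * ((dT : ℂ) * X) + (b0 : ℂ)) = 0 := by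
      rcases h with h1' | h2' | h3'
      · rw [h1']; ring
      · exact mul_eq_zero_of_left (mul_eq_zero_of_right _ h2') _
      · exact mul_eq_zero_of_right _ h3'
    have hfin := hkey.trans hz
    exact (mul_eq_zero.1 hfin).resolve_left (pow_ne_zero 6 hdTC)
end

section
/- The Routh–Hurwitz conditions for the cubic q_r hold if and only if R_r < 1; that is, (a₀ > 0 and a₁ > 0 and a₂·a₁ > a₀) if and only if R_r < 1. -/
/-- The Routh–Hurwitz conditions for the cubic `q_r` hold if and only if `R_r < 1`. -/
theorem routh_hurwitz_qr_iff
    (lam dT ks kr p mu dI dL αs αr Ns Nr dV Rr a2 a1 a0 : ℝ)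
    (hlam : 0 < lam) (hdT : 0 < dT) (hks : 0 < ks) (hkr : 0 < kr)
    (hdI : 0 < dI) (hdL : 0 < dL) (hαs : 0 < αs) (hαr : 0 < αr)
    (hNs : 0 < Ns) (hNr : 0 < Nr) (hdV : 0 < dV)
    (hp : p ∈ Set.Ioo (0 : ℝ) 1) (hmu : mu ∈ Set.Ioo (0 : ℝ) 1)
    (hRr : Rr = lam * kr * Nr * (αr + (1 - p) * dL) / (dT * dV * (dL + αr)))
    (ha2 : a2 = dT * (dI + dL + αr + dV))
    (ha1 : a1 = dT ^ 2 * (dV + dI) * (dL + αr) + dT ^ 2 * dV * dI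
        - dT * dI * (1 - p) * lam * kr * Nr)
    (ha0 : a0 = dT ^ 3 * dV * dI * (dL + αr)
        - dT ^ 2 * dI * lam * kr * Nr * (αr + (1 - p) * dL)) :
    (0 < a0 ∧ 0 < a1 ∧ a0 < a2 * a1) ↔ Rr < 1 := by
  obtain ⟨hp0, hp1⟩ := hp
  have h1p : 0 < 1 - p := by linarith
  have hden : 0 < dT * dV * (dL + αr) := by positivity
  have hkey : Rr < 1 ↔
      lam * kr * Nr * (αr + (1 - p) * dL) < dT * dV * (dL + αr) := by
    rw [hRr, div_lt_one hden]
  rw [hkey]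
  constructor
  · rintro ⟨h0, -, -⟩
    have h2 : 0 < dT ^ 2 * dI := by positivity
    nlinarith [h0, h2]
  · intro hN
    have hpv : (1 - p) * (lam * kr * Nr) < dT * dV := by
      have h3 : (1 - p) * (lam * kr * Nr) * (dL + αr)
          ≤ lam * kr * Nr * (αr + (1 - p) * dL) := by
        nlinarith [mul_pos hp0 hαr, mul_pos (mul_pos hlam hkr) hNr]
      have h4 : (1 - p) * (lam * kr * Nr) * (dL + αr) < dT * dV * (dL + αr) :=
        lt_of_le_of_lt h3 hN
      have h5 : 0 < dL + αr := by positivity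
      exact lt_of_mul_lt_mul_right h4 h5.le
    refine ⟨?_, ?_, ?_⟩
    · nlinarith [mul_pos (mul_pos (pow_pos hdT 2) hdI) (sub_pos.mpr hN)]
    · nlinarith [mul_pos (mul_pos hdT hdI) (sub_pos.mpr hpv),
        mul_pos (mul_pos (pow_pos hdT 2) (add_pos hdV hdI)) (add_pos hdL hαr)]
    · have hK : 0 ≤ dT ^ 2 * dI * (lam * kr * Nr * (αr + (1 - p) * dL)) := by
        positivity
      have h6 := mul_lt_mul_of_pos_left hpv
        (show (0:ℝ) < dT ^ 2 * (dI + dL + αr + dV) * dI by positivity)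
      have hin : dV * dI < (dI + dL + αr + dV) * (dV + dI) := by
        nlinarith [mul_pos hdV hdI, mul_pos hdI hdI, mul_pos hdL (add_pos hdV hdI),
          mul_pos hαr (add_pos hdV hdI), mul_pos hdV (add_pos hdV hdI)]
      have h7 : 0 < dT ^ 3 * ((dL + αr) *
          ((dI + dL + αr + dV) * (dV + dI) - dV * dI)) := by
        have := sub_pos.mpr hin
        positivity
      subst ha0 ha1 ha2
      linarith [h6, h7, hK]
end

section
/- The Routh–Hurwitz conditions for the cubic q_s hold if and only if R_s < 1/(1−μ); that is, (b₀ > 0 and b₁ > 0 and b₂·b₁ > b₀) if and only if R_s < 1/(1−μ). -/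
/-- The Routh–Hurwitz conditions for the cubic `q_s` hold if and only if `R_s < 1/(1-μ)`. -/
theorem routh_hurwitz_qs_iff
    (lam dT ks kr p mu dI dL αs αr Ns Nr dV Rs b2 b1 b0 : ℝ)
    (hlam : 0 < lam) (hdT : 0 < dT) (hks : 0 < ks) (hkr : 0 < kr)
    (hdI : 0 < dI) (hdL : 0 < dL) (hαs : 0 < αs) (hαr : 0 < αr)
    (hNs : 0 < Ns) (hNr : 0 < Nr) (hdV : 0 < dV)
    (hp : p ∈ Set.Ioo (0 : ℝ) 1) (hmu : mu ∈ Set.Ioo (0 : ℝ) 1)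
    (hRs : Rs = lam * ks * Ns * (αs + (1 - p) * dL) / (dT * dV * (dL + αs)))
    (hb2 : b2 = dT * (dI + dL + αs + dV))
    (hb1 : b1 = dT ^ 2 * (dV + dI) * (dL + αs) + dT ^ 2 * dV * dI
        - dT * dI * (1 - mu) * (1 - p) * lam * ks * Ns)
    (hb0 : b0 = dT ^ 3 * dV * dI * (dL + αs)
        - dT ^ 2 * dI * (1 - mu) * lam * ks * Ns * (αs + (1 - p) * dL)) :
    (0 < b0 ∧ 0 < b1 ∧ b0 < b2 * b1) ↔ Rs < 1 / (1 - mu) := by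
  obtain ⟨hp0, hp1⟩ := hp
  obtain ⟨hmu0, hmu1⟩ := hmu
  have h1p : 0 < 1 - p := by linarith
  have h1mu : 0 < 1 - mu := by linarith
  obtain ⟨C, hC⟩ : ∃ x : ℝ, x = (1 - mu) * lam * ks * Ns := ⟨_, rfl⟩
  obtain ⟨L, hLdef⟩ : ∃ x : ℝ, x = dL + αs := ⟨_, rfl⟩
  obtain ⟨M, hMdef⟩ : ∃ x : ℝ, x = αs + (1 - p) * dL := ⟨_, rfl⟩
  have hCpos : 0 < C := by rw [hC]; positivity
  have hL : 0 < L := by rw [hLdef]; linarith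
  have hM : 0 < M := by rw [hMdef]; positivity
  have hb0' : b0 = dT ^ 2 * dI * (dT * dV * L - C * M) := by
    rw [hb0, hC, hLdef, hMdef]; ring
  have hb1' : b1 = dT * (dT * (dV + dI) * L + dI * (dT * dV - (1 - p) * C)) := by
    rw [hb1, hC, hLdef]; ring
  have hb2' : b2 = dT * (dI + L + dV) := by rw [hb2, hLdef]; ring
  have hcoef : 0 < dT ^ 2 * dI := by positivity
  have hden : 0 < dT * dV * L := by positivity
  have hiff : Rs < 1 / (1 - mu) ↔ C * M < dT * dV * L := by
    rw [hRs, ← hLdef, ← hMdef, div_lt_div_iff₀ hden h1mu]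
    have heq : lam * ks * Ns * M * (1 - mu) = C * M := by rw [hC]; ring
    constructor <;> intro h <;> linarith [heq]
  rw [hiff]
  constructor
  · rintro ⟨h0, -, -⟩
    rw [hb0'] at h0
    have h8 : 0 < dT * dV * L - C * M := (mul_pos_iff_of_pos_left hcoef).mp h0
    linarith
  · intro hX
    have hb0pos : 0 < b0 := by rw [hb0']; exact mul_pos hcoef (by linarith)
    have hkey : (1 - p) * C < dT * dV := by
      have hd : C * M - (1 - p) * C * L = C * (p * αs) := by rw [hLdef, hMdef]; ring
      have hnn : 0 ≤ C * (p * αs) := by positivity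
      have h2 : (1 - p) * C * L ≤ C * M := by linarith
      clear hd hnn
      have h3 : (1 - p) * C * L < (dT * dV) * L := by linarith
      exact lt_of_mul_lt_mul_right h3 hL.le
    have hinner : 0 < dT * (dV + dI) * L + dI * (dT * dV - (1 - p) * C) := by
      have h1 : 0 < dT * (dV + dI) * L := by positivity
      have h2 : 0 < dI * (dT * dV - (1 - p) * C) := mul_pos hdI (by linarith)
      linarith
    have hb1pos : 0 < b1 := by rw [hb1']; positivity
    refine ⟨hb0pos, hb1pos, ?_⟩
    rw [hb0', hb1', hb2']
    have h4 : (dI + L + dV) * dI * ((1 - p) * C) < (dI + L + dV) * dI * (dT * dV) := by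
      have hpos : (0:ℝ) < (dI + L + dV) * dI := by positivity
      exact mul_lt_mul_of_pos_left hkey hpos
    have h5 : 0 ≤ dI * (C * M) := by positivity
    have h6 : 0 < dT * L * ((dV + dI) * (dI + L + dV) - dI * dV) := by
      have heq6 : dT * L * ((dV + dI) * (dI + L + dV) - dI * dV)
          = dT * L * (dV * L + dV * dV + dI * dI + dI * L + dI * dV) := by ring
      rw [heq6]; positivity
    have hkey2 : dI * (dT * dV * L - C * M)
        < (dI + L + dV) * (dT * (dV + dI) * L + dI * (dT * dV - (1 - p) * C)) := by
      linarith [h4, h5, h6]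
    have hfin := mul_lt_mul_of_pos_left hkey2 (show (0:ℝ) < dT ^ 2 by positivity)
    linarith [hfin]
end

section
/- (Routh–Hurwitz criterion for cubics.) Let a₂, a₁, a₀ be real numbers. Every complex root z of the polynomial X³ + a₂X² + a₁X + a₀ satisfies Re(z) < 0 if and only if a₀ > 0, a₁ > 0, a₂ > 0, and a₂·a₁ > a₀. -/
private lemma cubic_exists_real_root (a2 a1 a0 : ℝ) :
    ∃ r : ℝ, r ^ 3 + a2 * r ^ 2 + a1 * r + a0 = 0 := by

  set M : ℝ := |a2| + |a1| + |a0| + 1 with hM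
  have hM1 : 1 ≤ M := by have := abs_nonneg a2; have := abs_nonneg a1; have := abs_nonneg a0; linarith
  have hcont : ContinuousOn (fun x : ℝ => x ^ 3 + a2 * x ^ 2 + a1 * x + a0) (Set.Icc (-M) M) := by
    fun_prop
  have key := intermediate_value_Icc (by linarith : (-M : ℝ) ≤ M) hcont
  have hneg : (-M) ^ 3 + a2 * (-M) ^ 2 + a1 * (-M) + a0 ≤ 0 := by
    nlinarith [abs_nonneg a2, abs_nonneg a1, abs_nonneg a0, neg_abs_le a2, le_abs_self a2,
      neg_abs_le a1, le_abs_self a1, neg_abs_le a0, le_abs_self a0, sq_nonneg M]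
  have hpos : 0 ≤ M ^ 3 + a2 * M ^ 2 + a1 * M + a0 := by
    nlinarith [abs_nonneg a2, abs_nonneg a1, abs_nonneg a0, neg_abs_le a2, le_abs_self a2,
      neg_abs_le a1, le_abs_self a1, neg_abs_le a0, le_abs_self a0, sq_nonneg M]
  obtain ⟨r, _, hr⟩ := key ⟨hneg, hpos⟩
  exact ⟨r, hr⟩

/-- Routh–Hurwitz criterion for cubics: every complex root of
`X³ + a₂X² + a₁X + a₀` (real coefficients) has negative real part if and only if
`a₀ > 0`, `a₁ > 0`, `a₂ > 0` and `a₂a₁ > a₀`. -/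
theorem routh_hurwitz_cubic (a2 a1 a0 : ℝ) :
    (∀ z : ℂ, z ^ 3 + (a2 : ℂ) * z ^ 2 + (a1 : ℂ) * z + (a0 : ℂ) = 0 → z.re < 0) ↔
      (0 < a0 ∧ 0 < a1 ∧ 0 < a2 ∧ a0 < a2 * a1) := by
  constructor
  · intro h
    obtain ⟨r, hr⟩ := cubic_exists_real_root a2 a1 a0
    have hrneg : r < 0 := by
      have := h r (by exact_mod_cast congrArg (Complex.ofReal) hr)
      simpa using this
    set b : ℝ := a2 + r with hb
    set c : ℝ := a1 + r * b with hc
    have ha0 : a0 = -r * c := by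
      have : r ^ 3 + a2 * r ^ 2 + a1 * r + a0 = 0 := hr
      rw [hc, hb]; nlinarith [this]
    have hquad : ∀ w : ℂ, w ^ 2 + (b : ℂ) * w + (c : ℂ) = 0 → w.re < 0 := by
      intro w hw
      apply h
      have : w ^ 3 + (a2 : ℂ) * w ^ 2 + (a1 : ℂ) * w + (a0 : ℂ)
          = (w - (r : ℂ)) * (w ^ 2 + (b : ℂ) * w + (c : ℂ)) := by
        rw [ha0, hc, hb]; push_cast; ring
      rw [this, hw, mul_zero]
    have hquadR : ∀ t : ℝ, t ^ 2 + b * t + c = 0 → t < 0 := by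
      intro t ht
      have := hquad (t : ℂ) (by
        rw [show ((t:ℂ) ^ 2 + (b:ℂ) * t + (c:ℂ)) = ((t ^ 2 + b * t + c : ℝ) : ℂ) by push_cast; ring,
          ht, Complex.ofReal_zero])
      simpa using this
    have hbc : 0 < b ∧ 0 < c := by
      rcases le_or_gt (b ^ 2 - 4 * c) 0 with hd | hd
      · -- complex roots
        set s : ℝ := Real.sqrt (4 * c - b ^ 2) with hsdef
        have hs : s ^ 2 = 4 * c - b ^ 2 := Real.sq_sqrt (by linarith)
        have hsC : ((s : ℂ)) ^ 2 = 4 * (c : ℂ) - (b : ℂ) ^ 2 := by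
          exact_mod_cast congrArg (Complex.ofReal) hs
        set z : ℂ := (-(b : ℂ) / 2) + (s : ℂ) / 2 * Complex.I with hz
        have hroot : z ^ 2 + (b : ℂ) * z + (c : ℂ) = 0 := by
          rw [hz]
          linear_combination ((s:ℂ) ^ 2 / 4) * Complex.I_sq - (1 / 4) * hsC
        have hre := hquad z hroot
        rw [hz] at hre
        simp at hre
        have hb2 : 0 < b := by linarith
        exact ⟨hb2, by nlinarith [mul_pos hb2 hb2]⟩
      · -- real roots
        set s : ℝ := Real.sqrt (b ^ 2 - 4 * c) with hsdef
        have hs : s ^ 2 = b ^ 2 - 4 * c := Real.sq_sqrt (by linarith)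
        have h1 : ((-b + s) / 2 : ℝ) < 0 := hquadR _ (by linear_combination hs / 4)
        have h2 : ((-b - s) / 2 : ℝ) < 0 := hquadR _ (by linear_combination hs / 4)
        have hsnn : 0 ≤ s := Real.sqrt_nonneg _
        refine ⟨by linarith, ?_⟩
        nlinarith [mul_pos (neg_pos.mpr h1) (neg_pos.mpr h2), hs]
    obtain ⟨hbpos, hcpos⟩ := hbc
    have ha2 : 0 < a2 := by rw [show a2 = b - r by rw [hb]; ring]; linarith
    have ha1 : 0 < a1 := by
      have : a1 = c - r * b := by rw [hc]; ring
      rw [this]; nlinarith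
    refine ⟨by rw [ha0]; nlinarith, ha1, ha2, ?_⟩
    have key : a2 * a1 - a0 = b * (c - r * b + r ^ 2) := by rw [ha0, hc, hb]; ring
    nlinarith [key, mul_pos hbpos hcpos, mul_pos hbpos (mul_pos (neg_pos.mpr hrneg) hbpos), mul_nonneg hbpos.le (sq_nonneg r)]
  · rintro ⟨h0, h1, h2, h3⟩ z hz
    obtain ⟨x, y⟩ := z
    simp only [Complex.ext_iff, Complex.add_re, Complex.add_im, Complex.mul_re, Complex.mul_im,
      Complex.ofReal_re, Complex.ofReal_im, Complex.zero_re, Complex.zero_im,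
      pow_succ, pow_zero, one_mul, Complex.one_re, Complex.one_im] at hz
    obtain ⟨hre, him⟩ := hz
    show x < 0
    by_contra hx
    push_neg at hx
    rcases eq_or_ne y 0 with hy | hy
    · subst hy
      ring_nf at hre
      nlinarith [sq_nonneg x, mul_nonneg (mul_nonneg hx hx) hx]
    · have hy2 : y ^ 2 = 3 * x ^ 2 + 2 * a2 * x + a1 := by
        have : y * (3 * x ^ 2 - y ^ 2 + 2 * a2 * x + a1) = 0 := by ring_nf; ring_nf at him; linarith
        have := (mul_eq_zero.mp this).resolve_left hy
        nlinarith
      have hre' : 8 * x ^ 3 + 8 * a2 * x ^ 2 + 2 * (a1 + a2 ^ 2) * x + (a2 * a1 - a0) = 0 := by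
        ring_nf at hre ⊢
        nlinarith [hre, hy2]
      nlinarith [sq_nonneg x, mul_nonneg (mul_nonneg hx hx) hx, mul_nonneg hx hx, mul_nonneg h2.le (mul_nonneg hx hx), mul_nonneg (le_of_lt h1) hx]
end

section
/- Let J be the Jacobian matrix of the vector field f of (7CM) evaluated at the infection-free steady state E_0 = (λ/d_T, 0, 0, 0, 0, 0, 0). If R_r < 1 and R_s < 1/(1−μ), then every complex eigenvalue z of J satisfies Re(z) < 0. -/
set_option maxHeartbeats 1000000

/-- No root of `(z+dI)(z+dV)(z+dL+a) = c((1-pp)(z+dL)+a)` has nonnegative real part when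
`c((1-pp)dL+a) < dI dV (dL+a)`. -/
lemma hivAuxCubic (dI dV dL a c pp : ℝ) (hdI : 0 < dI) (hdV : 0 < dV) (hdL : 0 < dL)
    (ha : 0 < a) (hc : 0 < c) (hp0 : 0 < pp) (hp1 : pp < 1)
    (hcond : c * ((1 - pp) * dL + a) < dI * dV * (dL + a))
    (z : ℂ) (hz : 0 ≤ z.re)
    (heq : (z + dI) * (z + dV) * (z + dL + a)
         = c * ((1 - pp) * (z + dL) + a)) : False := by
  set A : ℝ := (1 - pp) * dL + a with hA_def
  set B : ℝ := dL + a with hB_def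
  have hA : 0 < A := by nlinarith
  have hB : 0 < B := by positivity
  set W : ℂ := (1 - (pp:ℂ)) * (z + dL) + a with hW_def
  have hre : ∀ t : ℝ, 0 < t → t ≤ ‖z + t‖ := by
    intro t ht
    calc t ≤ (z + (t:ℂ)).re := by simp [Complex.add_re]; linarith
    _ ≤ ‖z + t‖ := Complex.re_le_norm _
  have habsI := hre dI hdI
  have habsV := hre dV hdV
  have habsB : B ≤ ‖z + dL + a‖ := by
    calc B ≤ (z + (dL:ℂ) + (a:ℂ)).re := by simp [Complex.add_re]; linarith
    _ ≤ _ := Complex.re_le_norm _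
  have hWre : W.re = (1 - pp) * z.re + A := by
    simp [hW_def, Complex.add_re, Complex.mul_re, Complex.sub_re, Complex.ofReal_re,
      Complex.ofReal_im, Complex.add_im, hA_def]
    ring
  have hWim : W.im = (1 - pp) * z.im := by
    simp [hW_def, Complex.add_im, Complex.mul_im, Complex.sub_im, Complex.ofReal_re,
      Complex.ofReal_im, Complex.add_re]
  have hAB : (1 - pp) * B ≤ A := by nlinarith
  have habsW : B * ‖W‖ ≤ A * ‖z + dL + a‖ := by
    apply le_of_pow_le_pow_left₀ (n := 2) two_ne_zero (by positivity)
    have e1 : (‖W‖) ^ 2 = W.re ^ 2 + W.im ^ 2 := by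
      rw [Complex.sq_norm, Complex.normSq_apply]; ring
    have e2 : (‖z + dL + a‖) ^ 2 = (z.re + B) ^ 2 + z.im ^ 2 := by
      rw [Complex.sq_norm, Complex.normSq_apply]
      simp only [Complex.add_re, Complex.add_im, Complex.ofReal_re, Complex.ofReal_im, hB_def]
      ring
    have h3 : B * W.re ≤ A * (z.re + B) := by rw [hWre]; nlinarith
    have h3' : 0 ≤ B * W.re := by
      rw [hWre]
      have : 0 ≤ (1 - pp) * z.re := mul_nonneg (by linarith) hz
      nlinarith
    have h4 : (B * W.re) ^ 2 ≤ (A * (z.re + B)) ^ 2 := pow_le_pow_left₀ h3' h3 2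
    have h5 : (B * W.im) ^ 2 ≤ (A * z.im) ^ 2 := by
      rw [hWim]
      have h6 : ((1 - pp) * B) ^ 2 ≤ A ^ 2 := pow_le_pow_left₀ (by nlinarith) hAB 2
      have := mul_le_mul_of_nonneg_right h6 (sq_nonneg z.im)
      nlinarith [this]
    calc (B * ‖W‖) ^ 2 = (B * W.re) ^ 2 + (B * W.im) ^ 2 := by rw [mul_pow, e1]; ring
    _ ≤ (A * (z.re + B)) ^ 2 + (A * z.im) ^ 2 := by linarith
    _ = A ^ 2 * ((z.re + B) ^ 2 + z.im ^ 2) := by ring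
    _ = (A * ‖z + dL + a‖) ^ 2 := by rw [mul_pow, e2]
  have h5 : ‖z + dI‖ * ‖z + dV‖ * ‖z + dL + a‖
      = c * ‖W‖ := by
    rw [← norm_mul, ← norm_mul, heq, norm_mul]
    simp only [norm_mul, Complex.norm_real, Real.norm_eq_abs, abs_of_pos hc]
  have habspos : 0 < ‖z + dL + a‖ := lt_of_lt_of_le hB habsB
  have k1 : dI * dV * ‖z + dL + a‖ ≤ c * ‖W‖ := by
    rw [← h5]
    gcongr
  have k2 : dI * dV * B * ‖z + dL + a‖ ≤ c * A * ‖z + dL + a‖ := by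
    calc dI * dV * B * ‖z + dL + a‖
        = B * (dI * dV * ‖z + dL + a‖) := by ring
    _ ≤ B * (c * ‖W‖) := mul_le_mul_of_nonneg_left k1 hB.le
    _ = c * (B * ‖W‖) := by ring
    _ ≤ c * (A * ‖z + dL + a‖) := mul_le_mul_of_nonneg_left habsW hc.le
    _ = c * A * ‖z + dL + a‖ := by ring
  have k3 : dI * dV * B ≤ c * A := le_of_mul_le_mul_right (by linarith) habspos
  linarith

lemma hivProj (k : Fin 7) (x : Fin 7 → ℝ) :
    HasFDerivAt (fun y : Fin 7 → ℝ => y k)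
      (ContinuousLinearMap.proj (R := ℝ) (φ := fun _ : Fin 7 => ℝ) k) x :=
  (ContinuousLinearMap.proj (R := ℝ) (φ := fun _ : Fin 7 => ℝ) k).hasFDerivAt

lemma hivFd0 (lam dT ks kr : ℝ) (x : Fin 7 → ℝ) (v : Fin 7 → ℝ) :
    fderiv ℝ (fun y : Fin 7 → ℝ => lam - dT * y 0 - ks * y 0 * y 3 - kr * y 0 * y 6) x v
    = -(dT * v 0) - (ks * x 0 * v 3 + ks * v 0 * x 3) - (kr * x 0 * v 6 + kr * v 0 * x 6) := by
  have H := (((hasFDerivAt_const lam x).sub ((hivProj 0 x).const_mul dT)).sub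
      (((hivProj 0 x).const_mul ks).mul (hivProj 3 x))).sub
      (((hivProj 0 x).const_mul kr).mul (hivProj 6 x))
  rw [HasFDerivAt.fderiv (f := fun y : Fin 7 → ℝ => lam - dT * y 0 - ks * y 0 * y 3 - kr * y 0 * y 6) H]
  simp [ContinuousLinearMap.proj_apply, smul_eq_mul]
  ring

lemma hivFdA (c1 c2 c3 : ℝ) (i j k l : Fin 7) (x v : Fin 7 → ℝ) :
    fderiv ℝ (fun y : Fin 7 → ℝ => c1 * y i * y j + c2 * y k - c3 * y l) x v
    = (c1 * x i * v j + c1 * v i * x j) + c2 * v k - c3 * v l := by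
  have H := ((((hivProj i x).const_mul c1).mul (hivProj j x)).add
      ((hivProj k x).const_mul c2)).sub ((hivProj l x).const_mul c3)
  rw [HasFDerivAt.fderiv (f := fun y : Fin 7 → ℝ => c1 * y i * y j + c2 * y k - c3 * y l) H]
  simp [ContinuousLinearMap.proj_apply, smul_eq_mul]
  ring

lemma hivFdB (c1 c2 : ℝ) (i j k : Fin 7) (x v : Fin 7 → ℝ) :
    fderiv ℝ (fun y : Fin 7 → ℝ => c1 * y i * y j - c2 * y k) x v
    = (c1 * x i * v j + c1 * v i * x j) - c2 * v k := by
  have H := (((hivProj i x).const_mul c1).mul (hivProj j x)).sub ((hivProj k x).const_mul c2)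
  rw [HasFDerivAt.fderiv (f := fun y : Fin 7 → ℝ => c1 * y i * y j - c2 * y k) H]
  simp [ContinuousLinearMap.proj_apply, smul_eq_mul]
  ring

lemma hivFdC (c1 c2 : ℝ) (i j : Fin 7) (x v : Fin 7 → ℝ) :
    fderiv ℝ (fun y : Fin 7 → ℝ => c1 * y i - c2 * y j) x v
    = c1 * v i - c2 * v j := by
  have H := ((hivProj i x).const_mul c1).sub ((hivProj j x).const_mul c2)
  rw [HasFDerivAt.fderiv (f := fun y : Fin 7 → ℝ => c1 * y i - c2 * y j) H]
  simp [ContinuousLinearMap.proj_apply, smul_eq_mul]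

lemma hivFdD (c1 c2 c3 c4 : ℝ) (i j k l m n : Fin 7) (x v : Fin 7 → ℝ) :
    fderiv ℝ (fun y : Fin 7 → ℝ => c1 * y i * y j + c2 * y k * y l + c3 * y m - c4 * y n) x v
    = (c1 * x i * v j + c1 * v i * x j) + (c2 * x k * v l + c2 * v k * x l)
      + c3 * v m - c4 * v n := by
  have H := (((((hivProj i x).const_mul c1).mul (hivProj j x)).add
      (((hivProj k x).const_mul c2).mul (hivProj l x))).add ((hivProj m x).const_mul c3)).sub
      ((hivProj n x).const_mul c4)
  rw [HasFDerivAt.fderiv (f := fun y : Fin 7 → ℝ => c1 * y i * y j + c2 * y k * y l + c3 * y m - c4 * y n) H]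
  simp [ContinuousLinearMap.proj_apply, smul_eq_mul]
  ring

lemma hivFdE (c1 c2 c3 : ℝ) (i j k l m : Fin 7) (x v : Fin 7 → ℝ) :
    fderiv ℝ (fun y : Fin 7 → ℝ => c1 * y i * y j + c2 * y k * y l - c3 * y m) x v
    = (c1 * x i * v j + c1 * v i * x j) + (c2 * x k * v l + c2 * v k * x l) - c3 * v m := by
  have H := ((((hivProj i x).const_mul c1).mul (hivProj j x)).add
      (((hivProj k x).const_mul c2).mul (hivProj l x))).sub ((hivProj m x).const_mul c3)
  rw [HasFDerivAt.fderiv (f := fun y : Fin 7 → ℝ => c1 * y i * y j + c2 * y k * y l - c3 * y m) H]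
  simp [ContinuousLinearMap.proj_apply, smul_eq_mul]
  ring

/-- If `R_r < 1` and `R_s < 1/(1-μ)`, every complex eigenvalue of the Jacobian of (7CM)
at the infection-free steady state `E_0` has negative real part. -/
theorem eigenvalues_negative_real_part_at_E0
    (lam dT ks kr p mu dI dL αs αr Ns Nr dV Rr Rs : ℝ)
    (hlam : 0 < lam) (hdT : 0 < dT) (hks : 0 < ks) (hkr : 0 < kr)
    (hdI : 0 < dI) (hdL : 0 < dL) (hαs : 0 < αs) (hαr : 0 < αr)
    (hNs : 0 < Ns) (hNr : 0 < Nr) (hdV : 0 < dV)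
    (hp : p ∈ Set.Ioo (0 : ℝ) 1) (hmu : mu ∈ Set.Ioo (0 : ℝ) 1)
    (hRr : Rr = lam * kr * Nr * (αr + (1 - p) * dL) / (dT * dV * (dL + αr)))
    (hRs : Rs = lam * ks * Ns * (αs + (1 - p) * dL) / (dT * dV * (dL + αs)))
    (J : Matrix (Fin 7) (Fin 7) ℝ)
    (hJ : ∀ i j, J i j =
      fderiv ℝ (fun y : Fin 7 → ℝ => hivField lam dT ks kr p mu dI dL αs αr Ns Nr dV y i)
        ![lam / dT, 0, 0, 0, 0, 0, 0] (Pi.single j 1))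
    (h1 : Rr < 1) (h2 : Rs < 1 / (1 - mu)) :
    ∀ z : ℂ, Module.End.HasEigenvalue (Matrix.toLin' (J.map (fun r => (r : ℂ)))) z →
      z.re < 0 := by
  obtain ⟨hp0, hp1⟩ := hp
  obtain ⟨hmu0, hmu1⟩ := hmu
  intro z hzeig
  by_contra hcon
  push_neg at hcon
  have hz : 0 ≤ z.re := hcon
  -- the explicit Jacobian rows
  have hx0 : (![lam/dT,0,0,0,0,0,0] : Fin 7 → ℝ) 0 = lam/dT := rfl
  have hx3 : (![lam/dT,0,0,0,0,0,0] : Fin 7 → ℝ) 3 = 0 := rfl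
  have hx6 : (![lam/dT,0,0,0,0,0,0] : Fin 7 → ℝ) 6 = 0 := rfl
  have hJ0 : ∀ jj, J 0 jj = (if jj = 0 then -dT else if jj = 3 then -(ks * (lam/dT))
      else if jj = 6 then -(kr * (lam/dT)) else 0) := by
    intro jj
    rw [hJ 0 jj, show (fun y : Fin 7 → ℝ => hivField lam dT ks kr p mu dI dL αs αr Ns Nr dV y 0)
        = (fun y : Fin 7 → ℝ => lam - dT * y 0 - ks * y 0 * y 3 - kr * y 0 * y 6) from rfl,
      hivFd0]
    fin_cases jj <;> simp only [hx0, hx3, hx6, Pi.single_apply] <;>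
      simp (config := { decide := true }) <;> ring_nf
  have hJ1 : ∀ jj, J 1 jj = (if jj = 1 then -dI else if jj = 2 then αs
      else if jj = 3 then (1 - p) * (1 - mu) * ks * (lam/dT) else 0) := by
    intro jj
    rw [hJ 1 jj, show (fun y : Fin 7 → ℝ => hivField lam dT ks kr p mu dI dL αs αr Ns Nr dV y 1)
        = (fun y : Fin 7 → ℝ => (1 - p) * (1 - mu) * ks * y 0 * y 3 + αs * y 2 - dI * y 1)
        from rfl, hivFdA]
    fin_cases jj <;> simp only [hx0, hx3, hx6, Pi.single_apply] <;>
      simp (config := { decide := true }) <;> ring_nf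
  have hJ2 : ∀ jj, J 2 jj = (if jj = 2 then -(αs + dL)
      else if jj = 3 then p * (1 - mu) * ks * (lam/dT) else 0) := by
    intro jj
    rw [hJ 2 jj, show (fun y : Fin 7 → ℝ => hivField lam dT ks kr p mu dI dL αs αr Ns Nr dV y 2)
        = (fun y : Fin 7 → ℝ => p * (1 - mu) * ks * y 0 * y 3 - (αs + dL) * y 2) from rfl,
      hivFdB]
    fin_cases jj <;> simp only [hx0, hx3, hx6, Pi.single_apply] <;>
      simp (config := { decide := true }) <;> ring_nf
  have hJ3 : ∀ jj, J 3 jj = (if jj = 1 then Ns * dI else if jj = 3 then -dV else 0) := by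
    intro jj
    rw [hJ 3 jj, show (fun y : Fin 7 → ℝ => hivField lam dT ks kr p mu dI dL αs αr Ns Nr dV y 3)
        = (fun y : Fin 7 → ℝ => Ns * dI * y 1 - dV * y 3) from rfl, hivFdC]
    fin_cases jj <;> simp only [hx0, hx3, hx6, Pi.single_apply] <;>
      simp (config := { decide := true }) <;> ring_nf
  have hJ4 : ∀ jj, J 4 jj = (if jj = 3 then (1 - p) * mu * ks * (lam/dT)
      else if jj = 4 then -dI else if jj = 5 then αr
      else if jj = 6 then (1 - p) * kr * (lam/dT) else 0) := by
    intro jj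
    rw [hJ 4 jj, show (fun y : Fin 7 → ℝ => hivField lam dT ks kr p mu dI dL αs αr Ns Nr dV y 4)
        = (fun y : Fin 7 → ℝ => (1 - p) * mu * ks * y 0 * y 3 + (1 - p) * kr * y 0 * y 6
            + αr * y 5 - dI * y 4) from rfl, hivFdD]
    fin_cases jj <;> simp only [hx0, hx3, hx6, Pi.single_apply] <;>
      simp (config := { decide := true }) <;> ring_nf
  have hJ5 : ∀ jj, J 5 jj = (if jj = 3 then p * mu * ks * (lam/dT)
      else if jj = 5 then -(αr + dL) else if jj = 6 then p * kr * (lam/dT) else 0) := by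
    intro jj
    rw [hJ 5 jj, show (fun y : Fin 7 → ℝ => hivField lam dT ks kr p mu dI dL αs αr Ns Nr dV y 5)
        = (fun y : Fin 7 → ℝ => p * mu * ks * y 0 * y 3 + p * kr * y 0 * y 6
            - (αr + dL) * y 5) from rfl, hivFdE]
    fin_cases jj <;> simp only [hx0, hx3, hx6, Pi.single_apply] <;>
      simp (config := { decide := true }) <;> ring_nf
  have hJ6 : ∀ jj, J 6 jj = (if jj = 4 then Nr * dI else if jj = 6 then -dV else 0) := by
    intro jj
    rw [hJ 6 jj, show (fun y : Fin 7 → ℝ => hivField lam dT ks kr p mu dI dL αs αr Ns Nr dV y 6)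
        = (fun y : Fin 7 → ℝ => Nr * dI * y 4 - dV * y 6) from rfl, hivFdC]
    fin_cases jj <;> simp only [hx0, hx3, hx6, Pi.single_apply] <;>
      simp (config := { decide := true }) <;> ring_nf
  -- eigenvector
  obtain ⟨v, hv⟩ := hzeig.exists_hasEigenvector
  have hvne : v ≠ 0 := hv.2
  have hmul : (J.map (fun r => (r : ℂ))).mulVec v = z • v := by
    have := hv.apply_eq_smul
    rwa [Matrix.toLin'_apply] at this
  have E0 := congrFun hmul 0
  have E1 := congrFun hmul 1
  have E2 := congrFun hmul 2
  have E3 := congrFun hmul 3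
  have E4 := congrFun hmul 4
  have E5 := congrFun hmul 5
  have E6 := congrFun hmul 6
  simp only [Matrix.mulVec, dotProduct, Fin.sum_univ_seven, Matrix.map_apply,
    Pi.smul_apply, smul_eq_mul, hJ0] at E0
  simp only [Matrix.mulVec, dotProduct, Fin.sum_univ_seven, Matrix.map_apply,
    Pi.smul_apply, smul_eq_mul, hJ1] at E1
  simp only [Matrix.mulVec, dotProduct, Fin.sum_univ_seven, Matrix.map_apply,
    Pi.smul_apply, smul_eq_mul, hJ2] at E2
  simp only [Matrix.mulVec, dotProduct, Fin.sum_univ_seven, Matrix.map_apply,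
    Pi.smul_apply, smul_eq_mul, hJ3] at E3
  simp only [Matrix.mulVec, dotProduct, Fin.sum_univ_seven, Matrix.map_apply,
    Pi.smul_apply, smul_eq_mul, hJ4] at E4
  simp only [Matrix.mulVec, dotProduct, Fin.sum_univ_seven, Matrix.map_apply,
    Pi.smul_apply, smul_eq_mul, hJ5] at E5
  simp only [Matrix.mulVec, dotProduct, Fin.sum_univ_seven, Matrix.map_apply,
    Pi.smul_apply, smul_eq_mul, hJ6] at E6
  simp (config := { decide := true }) at E0 E1 E2 E3 E4 E5 E6
  push_cast at E0 E1 E2 E3 E4 E5 E6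
  -- nonvanishing facts
  have hne : ∀ t : ℝ, 0 < t → z + (t:ℂ) ≠ 0 := by
    intro t ht h
    have := congrArg Complex.re h
    simp [Complex.add_re] at this
    linarith
  have hnes : z + (αs:ℂ) + (dL:ℂ) ≠ 0 := by
    intro h
    have := congrArg Complex.re h
    simp [Complex.add_re] at this
    linarith
  have hner : z + (αr:ℂ) + (dL:ℂ) ≠ 0 := by
    intro h
    have := congrArg Complex.re h
    simp [Complex.add_re] at this
    linarith
  by_cases hv3 : v 3 = 0
  · -- s-block trivial: v1 = v2 = 0
    have h9 : ((Ns:ℂ) * (dI:ℂ)) * v 1 = 0 := by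
      linear_combination E3 + (z + (dV:ℂ)) * hv3
    have hv1 : v 1 = 0 := by
      rcases mul_eq_zero.mp h9 with h | h
      · exact absurd h (mul_ne_zero (Complex.ofReal_ne_zero.mpr hNs.ne')
          (Complex.ofReal_ne_zero.mpr hdI.ne'))
      · exact h
    have h10 : (z + (αs:ℂ) + (dL:ℂ)) * v 2 = 0 := by
      linear_combination -E2 + ((p:ℂ) * (1 - (mu:ℂ)) * (ks:ℂ) * ((lam:ℂ)/(dT:ℂ))) * hv3
    have hv2 : v 2 = 0 := by
      rcases mul_eq_zero.mp h10 with h | h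
      · exact absurd h hnes
      · exact h
    by_cases hv6 : v 6 = 0
    · -- r-block trivial as well: v4 = v5 = 0, then v0 = 0, contradiction
      have h11 : ((Nr:ℂ) * (dI:ℂ)) * v 4 = 0 := by
        linear_combination E6 + (z + (dV:ℂ)) * hv6
      have hv4 : v 4 = 0 := by
        rcases mul_eq_zero.mp h11 with h | h
        · exact absurd h (mul_ne_zero (Complex.ofReal_ne_zero.mpr hNr.ne')
            (Complex.ofReal_ne_zero.mpr hdI.ne'))
        · exact h
      have h12 : (z + (αr:ℂ) + (dL:ℂ)) * v 5 = 0 := by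
        linear_combination -E5 + ((p:ℂ) * (mu:ℂ) * (ks:ℂ) * ((lam:ℂ)/(dT:ℂ))) * hv3
          + ((p:ℂ) * (kr:ℂ) * ((lam:ℂ)/(dT:ℂ))) * hv6
      have hv5 : v 5 = 0 := by
        rcases mul_eq_zero.mp h12 with h | h
        · exact absurd h hner
        · exact h
      have h13 : (z + (dT:ℂ)) * v 0 = 0 := by
        linear_combination -E0 - ((ks:ℂ) * ((lam:ℂ)/(dT:ℂ))) * hv3
          - ((kr:ℂ) * ((lam:ℂ)/(dT:ℂ))) * hv6
      have hv0 : v 0 = 0 := by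
        rcases mul_eq_zero.mp h13 with h | h
        · exact absurd h (hne dT hdT)
        · exact h
      apply hvne
      funext i
      have : (0 : Fin 7 → ℂ) i = 0 := rfl
      rw [this]
      fin_cases i
      exacts [hv0, hv1, hv2, hv3, hv4, hv5, hv6]
    · -- r-block nontrivial: cubic for resistant strain
      have key : (z + (dI:ℂ)) * (z + (dV:ℂ)) * (z + (dL:ℂ) + (αr:ℂ)) * v 6
          = ((Nr:ℂ) * (dI:ℂ) * (kr:ℂ) * ((lam:ℂ)/(dT:ℂ)))
            * ((1 - (p:ℂ)) * (z + (dL:ℂ)) + (αr:ℂ)) * v 6 := by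
        linear_combination (-(Nr:ℂ) * (dI:ℂ) * (z + (dL:ℂ) + (αr:ℂ))) * E4
          - ((Nr:ℂ) * (dI:ℂ) * (αr:ℂ)) * E5
          - ((z + (dI:ℂ)) * (z + (dL:ℂ) + (αr:ℂ))) * E6
          + ((Nr:ℂ) * (dI:ℂ) * (z + (dL:ℂ) + (αr:ℂ)) * ((1-(p:ℂ)) * (mu:ℂ) * (ks:ℂ) * ((lam:ℂ)/(dT:ℂ)))
             + (Nr:ℂ) * (dI:ℂ) * (αr:ℂ) * ((p:ℂ) * (mu:ℂ) * (ks:ℂ) * ((lam:ℂ)/(dT:ℂ)))) * hv3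
      have heqr := mul_right_cancel₀ hv6 key
      have hcondr : (Nr * dI * kr * (lam/dT)) * ((1 - p) * dL + αr) < dI * dV * (dL + αr) := by
        have hden : 0 < dT * dV * (dL + αr) := by positivity
        rw [hRr, div_lt_one hden] at h1
        have hrw : Nr * dI * kr * (lam/dT) * ((1 - p) * dL + αr)
            = dI * (lam * kr * Nr * (αr + (1 - p) * dL)) / dT := by
          field_simp
          ring
        rw [hrw, div_lt_iff₀ hdT]
        nlinarith [mul_lt_mul_of_pos_left h1 hdI]
      exact hivAuxCubic dI dV dL αr (Nr * dI * kr * (lam/dT)) p hdI hdV hdL hαr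
        (by positivity) hp0 hp1 hcondr z hz (by push_cast; linear_combination heqr)
  · -- s-block nontrivial: cubic for sensitive strain
    have key : (z + (dI:ℂ)) * (z + (dV:ℂ)) * (z + (dL:ℂ) + (αs:ℂ)) * v 3
        = ((Ns:ℂ) * (dI:ℂ) * (1 - (mu:ℂ)) * (ks:ℂ) * ((lam:ℂ)/(dT:ℂ)))
          * ((1 - (p:ℂ)) * (z + (dL:ℂ)) + (αs:ℂ)) * v 3 := by
      linear_combination (-(Ns:ℂ) * (dI:ℂ) * (z + (dL:ℂ) + (αs:ℂ))) * E1
        - ((Ns:ℂ) * (dI:ℂ) * (αs:ℂ)) * E2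
        - ((z + (dI:ℂ)) * (z + (dL:ℂ) + (αs:ℂ))) * E3
    have heqs := mul_right_cancel₀ hv3 key
    have hconds : (Ns * dI * (1 - mu) * ks * (lam/dT)) * ((1 - p) * dL + αs)
        < dI * dV * (dL + αs) := by
      have hden : 0 < dT * dV * (dL + αs) := by positivity
      rw [hRs, div_lt_div_iff₀ hden (by linarith : (0:ℝ) < 1 - mu)] at h2
      have hrw : Ns * dI * (1 - mu) * ks * (lam/dT) * ((1 - p) * dL + αs)
          = dI * (lam * ks * Ns * (αs + (1 - p) * dL) * (1 - mu)) / dT := by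
        field_simp
        ring
      rw [hrw, div_lt_iff₀ hdT]
      nlinarith [mul_lt_mul_of_pos_left h2 hdI]
    exact hivAuxCubic dI dV dL αs (Ns * dI * (1 - mu) * ks * (lam/dT)) p hdI hdV hdL hαs
      (mul_pos (mul_pos (mul_pos (mul_pos hNs hdI) (by linarith : (0:ℝ) < 1 - mu)) hks)
        (div_pos hlam hdT)) hp0 hp1 hconds z hz (by push_cast; linear_combination heqs)
end

section
/- Let J be the Jacobian matrix of the vector field f of (7CM) evaluated at the infection-free steady state E_0 = (λ/d_T, 0, 0, 0, 0, 0, 0). If R_r > 1 or R_s > 1/(1−μ), then J has a real eigenvalue that is strictly positive. -/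
/-- Projection as a continuous linear map. -/
noncomputable def pj (k : Fin 7) : (Fin 7 → ℝ) →L[ℝ] ℝ := ContinuousLinearMap.proj k

lemma pj_hasFDerivAt (x : Fin 7 → ℝ) (k : Fin 7) :
    HasFDerivAt (fun y : Fin 7 → ℝ => y k) (pj k) x :=
  (pj k).hasFDerivAt

lemma pj_single (k j : Fin 7) : pj k (Pi.single j 1) = if k = j then 1 else 0 := by
  simp [pj, Pi.single_apply]

/-- Any monic cubic with negative constant coefficient has a positive root. -/
lemma cubic_pos_root (a2 a1 a0 : ℝ) (h : a0 < 0) :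
    ∃ z : ℝ, 0 < z ∧ z ^ 3 + a2 * z ^ 2 + a1 * z + a0 = 0 := by
  set f : ℝ → ℝ := fun z => z ^ 3 + a2 * z ^ 2 + a1 * z + a0 with hf
  set M : ℝ := 1 + |a2| + |a1| + |a0| with hM
  have hM1 : 1 ≤ M := by
    have := abs_nonneg a2; have := abs_nonneg a1; have := abs_nonneg a0
    simp only [hM]; linarith
  have hfM : 0 < f M := by
    have h2 : -|a2| ≤ a2 := neg_abs_le a2
    have h1 : -|a1| ≤ a1 := neg_abs_le a1
    have h0 : -|a0| ≤ a0 := neg_abs_le a0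
    have hMpos : 0 < M := by linarith
    have key : M ^ 2 * (M - (|a2| + |a1| + |a0|)) ≤ f M := by
      have hMM : M ≤ M ^ 2 := by nlinarith
      have hMM1 : 1 ≤ M ^ 2 := by nlinarith
      have e1 : |a1| * M ≤ |a1| * M ^ 2 :=
        mul_le_mul_of_nonneg_left hMM (abs_nonneg a1)
      have e0 : |a0| ≤ |a0| * M ^ 2 := by
        calc |a0| = |a0| * 1 := by ring
        _ ≤ |a0| * M ^ 2 := mul_le_mul_of_nonneg_left hMM1 (abs_nonneg a0)
      simp only [hf]
      nlinarith [abs_nonneg a2, sq_nonneg M]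
    have : M - (|a2| + |a1| + |a0|) = 1 := by simp only [hM]; ring
    rw [this] at key
    nlinarith [sq_nonneg M]
  have hcont : ContinuousOn f (Set.Icc 0 M) := by fun_prop
  have h0M : (0:ℝ) ≤ M := by linarith
  have hmem : (0:ℝ) ∈ Set.Ioo (f 0) (f M) := by
    constructor
    · simpa [hf] using h
    · exact hfM
  obtain ⟨z, hz, hfz⟩ := intermediate_value_Ioo h0M hcont hmem
  exact ⟨z, hz.1, hfz⟩

set_option maxHeartbeats 1000000 in
lemma jacobian_entries (lam dT ks kr p mu dI dL αs αr Ns Nr dV T0 : ℝ)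
    (hT0def : T0 = lam / dT)
    (J : Matrix (Fin 7) (Fin 7) ℝ)
    (hJ : ∀ i j, J i j =
      fderiv ℝ (fun y : Fin 7 → ℝ => hivField lam dT ks kr p mu dI dL αs αr Ns Nr dV y i)
        ![T0, 0, 0, 0, 0, 0, 0] (Pi.single j 1)) :
    ∀ i j, J i j =
      (if i = 0 then (if j = 0 then -dT else if j = 3 then -(ks*T0) else if j = 6 then -(kr*T0) else 0)
      else if i = 1 then (if j = 1 then -dI else if j = 2 then αs else if j = 3 then (1-p)*(1-mu)*ks*T0 else 0)
      else if i = 2 then (if j = 2 then -(αs+dL) else if j = 3 then p*(1-mu)*ks*T0 else 0)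
      else if i = 3 then (if j = 1 then Ns*dI else if j = 3 then -dV else 0)
      else if i = 4 then (if j = 3 then (1-p)*mu*ks*T0 else if j = 4 then -dI else if j = 5 then αr else if j = 6 then (1-p)*kr*T0 else 0)
      else if i = 5 then (if j = 3 then p*mu*ks*T0 else if j = 5 then -(αr+dL) else if j = 6 then p*kr*T0 else 0)
      else (if j = 4 then Nr*dI else if j = 6 then -dV else 0)) := by
    intro i j
    rw [hJ i j]
    have e0 : (![T0, (0:ℝ), 0, 0, 0, 0, 0]) 0 = T0 := rfl
    have e3 : (![T0, (0:ℝ), 0, 0, 0, 0, 0]) 3 = 0 := rfl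
    have e6 : (![T0, (0:ℝ), 0, 0, 0, 0, 0]) 6 = 0 := rfl
    fin_cases i
    · show fderiv ℝ (fun y : Fin 7 → ℝ =>
          lam - dT * y 0 - ks * y 0 * y 3 - kr * y 0 * y 6) ![T0,0,0,0,0,0,0] (Pi.single j 1) = _
      have hd := (((hasFDerivAt_const lam (![T0,0,0,0,0,0,0] : Fin 7 → ℝ)).sub
          ((pj_hasFDerivAt _ 0).const_mul dT)).sub
          (((pj_hasFDerivAt _ 0).const_mul ks).mul (pj_hasFDerivAt _ 3))).sub
          (((pj_hasFDerivAt _ 0).const_mul kr).mul (pj_hasFDerivAt _ 6))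
      erw [hd.fderiv]
      fin_cases j <;>
        simp (config := { decide := true }) [pj_single, e0, e3, e6]
    · show fderiv ℝ (fun y : Fin 7 → ℝ =>
          (1 - p) * (1 - mu) * ks * y 0 * y 3 + αs * y 2 - dI * y 1) ![T0,0,0,0,0,0,0] (Pi.single j 1) = _
      have hd := ((((pj_hasFDerivAt (![T0,0,0,0,0,0,0] : Fin 7 → ℝ) 0).const_mul
          ((1 - p) * (1 - mu) * ks)).mul (pj_hasFDerivAt _ 3)).add
          ((pj_hasFDerivAt _ 2).const_mul αs)).sub ((pj_hasFDerivAt _ 1).const_mul dI)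
      erw [hd.fderiv]
      fin_cases j <;>
        simp (config := { decide := true }) [pj_single, e0, e3, e6]
    · show fderiv ℝ (fun y : Fin 7 → ℝ =>
          p * (1 - mu) * ks * y 0 * y 3 - (αs + dL) * y 2) ![T0,0,0,0,0,0,0] (Pi.single j 1) = _
      have hd := (((pj_hasFDerivAt (![T0,0,0,0,0,0,0] : Fin 7 → ℝ) 0).const_mul
          (p * (1 - mu) * ks)).mul (pj_hasFDerivAt _ 3)).sub
          ((pj_hasFDerivAt _ 2).const_mul (αs + dL))
      erw [hd.fderiv]
      fin_cases j <;>
        simp (config := { decide := true }) [pj_single, e0, e3, e6]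
    · show fderiv ℝ (fun y : Fin 7 → ℝ =>
          Ns * dI * y 1 - dV * y 3) ![T0,0,0,0,0,0,0] (Pi.single j 1) = _
      have hd := ((pj_hasFDerivAt (![T0,0,0,0,0,0,0] : Fin 7 → ℝ) 1).const_mul (Ns * dI)).sub
          ((pj_hasFDerivAt _ 3).const_mul dV)
      erw [hd.fderiv]
      fin_cases j <;>
        simp (config := { decide := true }) [pj_single, e0, e3, e6]
    · show fderiv ℝ (fun y : Fin 7 → ℝ =>
          (1 - p) * mu * ks * y 0 * y 3 + (1 - p) * kr * y 0 * y 6 + αr * y 5 - dI * y 4)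
          ![T0,0,0,0,0,0,0] (Pi.single j 1) = _
      have hd := (((((pj_hasFDerivAt (![T0,0,0,0,0,0,0] : Fin 7 → ℝ) 0).const_mul
          ((1 - p) * mu * ks)).mul (pj_hasFDerivAt _ 3)).add
          (((pj_hasFDerivAt _ 0).const_mul ((1 - p) * kr)).mul (pj_hasFDerivAt _ 6))).add
          ((pj_hasFDerivAt _ 5).const_mul αr)).sub ((pj_hasFDerivAt _ 4).const_mul dI)
      erw [hd.fderiv]
      fin_cases j <;>
        simp (config := { decide := true }) [pj_single, e0, e3, e6]
    · show fderiv ℝ (fun y : Fin 7 → ℝ =>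
          p * mu * ks * y 0 * y 3 + p * kr * y 0 * y 6 - (αr + dL) * y 5)
          ![T0,0,0,0,0,0,0] (Pi.single j 1) = _
      have hd := ((((pj_hasFDerivAt (![T0,0,0,0,0,0,0] : Fin 7 → ℝ) 0).const_mul
          (p * mu * ks)).mul (pj_hasFDerivAt _ 3)).add
          (((pj_hasFDerivAt _ 0).const_mul (p * kr)).mul (pj_hasFDerivAt _ 6))).sub
          ((pj_hasFDerivAt _ 5).const_mul (αr + dL))
      erw [hd.fderiv]
      fin_cases j <;>
        simp (config := { decide := true }) [pj_single, e0, e3, e6]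
    · show fderiv ℝ (fun y : Fin 7 → ℝ =>
          Nr * dI * y 4 - dV * y 6) ![T0,0,0,0,0,0,0] (Pi.single j 1) = _
      have hd := ((pj_hasFDerivAt (![T0,0,0,0,0,0,0] : Fin 7 → ℝ) 4).const_mul (Nr * dI)).sub
          ((pj_hasFDerivAt _ 6).const_mul dV)
      erw [hd.fderiv]
      fin_cases j <;>
        simp (config := { decide := true }) [pj_single, e0, e3, e6]

set_option maxHeartbeats 4000000 in
/-- If `R_r > 1` or `R_s > 1/(1-μ)`, the Jacobian of (7CM) at the infection-free
steady state `E_0` has a strictly positive real eigenvalue. -/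
theorem positive_eigenvalue_at_E0
    (lam dT ks kr p mu dI dL αs αr Ns Nr dV Rr Rs : ℝ)
    (hlam : 0 < lam) (hdT : 0 < dT) (hks : 0 < ks) (hkr : 0 < kr)
    (hdI : 0 < dI) (hdL : 0 < dL) (hαs : 0 < αs) (hαr : 0 < αr)
    (hNs : 0 < Ns) (hNr : 0 < Nr) (hdV : 0 < dV)
    (hp : p ∈ Set.Ioo (0 : ℝ) 1) (hmu : mu ∈ Set.Ioo (0 : ℝ) 1)
    (hRr : Rr = lam * kr * Nr * (αr + (1 - p) * dL) / (dT * dV * (dL + αr)))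
    (hRs : Rs = lam * ks * Ns * (αs + (1 - p) * dL) / (dT * dV * (dL + αs)))
    (J : Matrix (Fin 7) (Fin 7) ℝ)
    (hJ : ∀ i j, J i j =
      fderiv ℝ (fun y : Fin 7 → ℝ => hivField lam dT ks kr p mu dI dL αs αr Ns Nr dV y i)
        ![lam / dT, 0, 0, 0, 0, 0, 0] (Pi.single j 1))
    (h : 1 < Rr ∨ 1 / (1 - mu) < Rs) :
    ∃ z : ℝ, 0 < z ∧ Module.End.HasEigenvalue (Matrix.toLin' J) z := by
  obtain ⟨hp0, hp1⟩ := hp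
  obtain ⟨hmu0, hmu1⟩ := hmu
  obtain ⟨T0, hT0def⟩ : ∃ t : ℝ, t = lam / dT := ⟨_, rfl⟩
  rw [← hT0def] at hJ
  have hT0 : 0 < T0 := hT0def ▸ div_pos hlam hdT
  have hT0eq : dT * T0 = lam := by rw [hT0def]; field_simp
  -- the Jacobian entries
  have hE : ∀ i j, J i j =
      (if i = 0 then (if j = 0 then -dT else if j = 3 then -(ks*T0) else if j = 6 then -(kr*T0) else 0)
      else if i = 1 then (if j = 1 then -dI else if j = 2 then αs else if j = 3 then (1-p)*(1-mu)*ks*T0 else 0)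
      else if i = 2 then (if j = 2 then -(αs+dL) else if j = 3 then p*(1-mu)*ks*T0 else 0)
      else if i = 3 then (if j = 1 then Ns*dI else if j = 3 then -dV else 0)
      else if i = 4 then (if j = 3 then (1-p)*mu*ks*T0 else if j = 4 then -dI else if j = 5 then αr else if j = 6 then (1-p)*kr*T0 else 0)
      else if i = 5 then (if j = 3 then p*mu*ks*T0 else if j = 5 then -(αr+dL) else if j = 6 then p*kr*T0 else 0)
      else (if j = 4 then Nr*dI else if j = 6 then -dV else 0)) :=
    jacobian_entries lam dT ks kr p mu dI dL αs αr Ns Nr dV T0 hT0def J hJ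
  -- the abstract eigenvalue helper
  have eigen_of : ∀ (z : ℝ) (v : Fin 7 → ℝ), v ≠ 0 → J.mulVec v = z • v →
      Module.End.HasEigenvalue (Matrix.toLin' J) z := by
    intro z v hv hmv
    exact Module.End.hasEigenvalue_of_hasEigenvector
      ⟨Module.End.mem_eigenspace_iff.2 (by rw [Matrix.toLin'_apply]; exact hmv), hv⟩
  -- Case A: a positive root of the resistant cubic gives a positive eigenvalue
  have caseA : ∀ z : ℝ, 0 < z →
      (z+dI)*(z+(αr+dL))*(z+dV) - Nr*dI*kr*T0*(αr*p + (1-p)*(z+(αr+dL))) = 0 →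
      ∃ z : ℝ, 0 < z ∧ Module.End.HasEigenvalue (Matrix.toLin' J) z := by
    intro z hz hQ
    refine ⟨z, hz, eigen_of z
      (fun i => if i = 0 then -(kr*T0*(z+(αr+dL))*(Nr*dI))
        else if i = 4 then (z+dV)*(z+dT)*(z+(αr+dL))
        else if i = 5 then p*kr*T0*(z+dT)*(Nr*dI)
        else if i = 6 then (z+dT)*(z+(αr+dL))*(Nr*dI) else 0) ?_ ?_⟩
    · intro hc
      have h6 : (z+dT)*(z+(αr+dL))*(Nr*dI) = (0:ℝ) := congrFun hc 6
      exact absurd h6 (by positivity)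
    · funext i
      fin_cases i <;>
        simp (config := { decide := true })
          [Matrix.mulVec, dotProduct, Fin.sum_univ_seven, hE, Pi.smul_apply,
            smul_eq_mul]
      · ring
      · linear_combination (-(z + dT)) * hQ
      · ring
      · ring
  rcases h with hRr1 | hRs1
  · -- resistant case: R_r > 1
    have hkey : dT * dV * (dL + αr) < lam * kr * Nr * (αr + (1 - p) * dL) := by
      have hden : 0 < dT * dV * (dL + αr) := by positivity
      rw [hRr, one_lt_div hden] at hRr1
      exact hRr1
    have ha0 : dI*(αr+dL)*dV - Nr*dI*kr*T0*(αr*p + (1-p)*(αr+dL)) < 0 := by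
      have h1 : dT * (dI*(αr+dL)*dV - Nr*dI*kr*T0*(αr*p + (1-p)*(αr+dL)))
          = dI * (dT * dV * (dL + αr) - lam * kr * Nr * (αr + (1 - p) * dL)) := by
        have : dT * (Nr*dI*kr*T0*(αr*p + (1-p)*(αr+dL)))
            = Nr*dI*kr*(dT*T0)*(αr*p + (1-p)*(αr+dL)) := by ring
        rw [hT0eq] at this
        nlinarith [this]
      nlinarith [mul_pos hdI (sub_pos.2 hkey), h1, hdT]
    obtain ⟨z, hz, hroot⟩ := cubic_pos_root (dI + (αr+dL) + dV)
      (dI*(αr+dL) + dI*dV + (αr+dL)*dV - Nr*dI*kr*T0*(1-p))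
      (dI*(αr+dL)*dV - Nr*dI*kr*T0*(αr*p + (1-p)*(αr+dL))) ha0
    refine caseA z hz ?_
    linear_combination hroot
  · -- sensitive case: R_s > 1/(1-μ)
    have h1mu : 0 < 1 - mu := by linarith
    have hkey : dT * dV * (dL + αs) < (1 - mu) * (lam * ks * Ns * (αs + (1 - p) * dL)) := by
      have hden : 0 < dT * dV * (dL + αs) := by positivity
      rw [hRs, div_lt_div_iff₀ h1mu hden] at hRs1
      nlinarith [hRs1]
    have ha0 : dI*(αs+dL)*dV - Ns*dI*(1-mu)*ks*T0*(αs*p + (1-p)*(αs+dL)) < 0 := by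
      have h1 : dT * (dI*(αs+dL)*dV - Ns*dI*(1-mu)*ks*T0*(αs*p + (1-p)*(αs+dL)))
          = dI * (dT * dV * (dL + αs) - (1 - mu) * (lam * ks * Ns * (αs + (1 - p) * dL))) := by
        have : dT * (Ns*dI*(1-mu)*ks*T0*(αs*p + (1-p)*(αs+dL)))
            = Ns*dI*(1-mu)*ks*(dT*T0)*(αs*p + (1-p)*(αs+dL)) := by ring
        rw [hT0eq] at this
        nlinarith [this]
      nlinarith [mul_pos hdI (sub_pos.2 hkey), h1, hdT]
    obtain ⟨z, hz, hroot⟩ := cubic_pos_root (dI + (αs+dL) + dV)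
      (dI*(αs+dL) + dI*dV + (αs+dL)*dV - Ns*dI*(1-mu)*ks*T0*(1-p))
      (dI*(αs+dL)*dV - Ns*dI*(1-mu)*ks*T0*(αs*p + (1-p)*(αs+dL))) ha0
    have hQs : (z+dI)*(z+(αs+dL))*(z+dV)
        - Ns*dI*(1-mu)*ks*T0*(αs*p + (1-p)*(z+(αs+dL))) = 0 := by
      linear_combination hroot
    by_cases hQr : (z+dI)*(z+(αr+dL))*(z+dV) - Nr*dI*kr*T0*(αr*p + (1-p)*(z+(αr+dL))) = 0
    · exact caseA z hz hQr
    · -- the resistant cubic is nonzero at z: build the full eigenvector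
      
      obtain ⟨Qrv, hQrv⟩ : ∃ q : ℝ, q = (z+dI)*(z+(αr+dL))*(z+dV)
          - Nr*dI*kr*T0*(αr*p + (1-p)*(z+(αr+dL))) := ⟨_, rfl⟩
      obtain ⟨Ee, hEe⟩ : ∃ e : ℝ, e = (z+(αr+dL))*((1-p)*mu*ks*T0) + αr*(p*mu*ks*T0) := ⟨_, rfl⟩
      rw [← hQrv] at hQr
      refine ⟨z, hz, eigen_of z
        (fun i =>
          if i = 0 then -((Ns*dI)*(z+(αs+dL))*(z+(αr+dL))*(ks*T0*Qrv + kr*T0*(Nr*dI)*Ee))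
          else if i = 1 then (z+dV)*(z+(αs+dL))*(z+dT)*(z+(αr+dL))*Qrv
          else if i = 2 then p*(1-mu)*ks*T0*(Ns*dI)*(z+dT)*(z+(αr+dL))*Qrv
          else if i = 3 then (Ns*dI)*(z+(αs+dL))*(z+dT)*(z+(αr+dL))*Qrv
          else if i = 4 then (z+dV)*((Ns*dI)*(z+(αs+dL))*(z+dT))*(z+(αr+dL))*Ee
          else if i = 5 then ((Ns*dI)*(z+(αs+dL))*(z+dT))*(Qrv*(p*mu*ks*T0) + p*kr*T0*(Nr*dI)*Ee)
          else ((Ns*dI)*(z+(αs+dL))*(z+dT))*(z+(αr+dL))*(Nr*dI)*Ee) ?_ ?_⟩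
      · intro hc
        have h3 : (Ns*dI)*(z+(αs+dL))*(z+dT)*(z+(αr+dL))*Qrv = (0:ℝ) := congrFun hc 3
        rcases mul_eq_zero.1 h3 with h' | h'
        · exact absurd h' (by positivity)
        · exact hQr h'
      · funext i
        fin_cases i <;>
          simp (config := { decide := true })
            [Matrix.mulVec, dotProduct, Fin.sum_univ_seven, hE, Pi.smul_apply,
              smul_eq_mul]
        · ring
        · first
            | linear_combination ((z + dT) * (z + (αr+dL)) * Qrv) * hQs
            | linear_combination (-((z + dT) * (z + (αr+dL)) * Qrv)) * hQs
        · ring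
        · ring
        · rw [hQrv, hEe]; ring
        · rw [hQrv, hEe]; ring
        · ring
end

section
/- (Forward invariance of the nonnegative orthant.) Let τ > 0 and let x : [0, τ] → ℝ^7 be differentiable with x'(t) = f(x(t)) for all t ∈ [0, τ]. If every component of x(0) is nonnegative, then every component of x(t) is nonnegative for all t ∈ [0, τ]. -/
open Set Filter Topology

private lemma neg_min_sq (a : ℝ) : min a 0 * a = min a 0 ^ 2 := by
  rcases le_total a 0 with h | h
  · rw [min_eq_left h]; ring
  · rw [min_eq_right h]; ring

private lemma min_mul_min_le_sq (a b : ℝ) : min a 0 * min b 0 ≤ min a 0 ^ 2 + min b 0 ^ 2 := by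
  nlinarith [sq_nonneg (min a 0 - min b 0), sq_nonneg (min a 0 + min b 0)]

private lemma cross_bound (a b : ℝ) : min a 0 * b ≤ min a 0 ^ 2 + min b 0 ^ 2 :=
  le_trans (mul_le_mul_of_nonpos_left (min_le_left b 0) (min_le_right a 0))
    (min_mul_min_le_sq a b)

private lemma prod_ge {M u v : ℝ} (hM : 0 ≤ M) (hu : |u| ≤ M) (hv : |v| ≤ M) :
    M * (min u 0 + min v 0) ≤ u * v := by
  obtain ⟨hu1, hu2⟩ := abs_le.mp hu
  obtain ⟨hv1, hv2⟩ := abs_le.mp hv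
  rcases le_total u 0 with h | h <;> rcases le_total v 0 with h' | h'
  · rw [min_eq_left h, min_eq_left h']
    nlinarith [mul_nonneg (neg_nonneg.mpr h) (neg_nonneg.mpr h'),
      mul_nonneg hM (by linarith : (0:ℝ) ≤ -(u + v))]
  · rw [min_eq_left h, min_eq_right h']
    nlinarith [mul_nonneg (neg_nonneg.mpr h) (sub_nonneg.mpr hv2)]
  · rw [min_eq_right h, min_eq_left h']
    nlinarith [mul_nonneg (neg_nonneg.mpr h') (sub_nonneg.mpr hu2)]
  · rw [min_eq_right h, min_eq_right h']
    nlinarith [mul_nonneg h h']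

private lemma tri_bound {M : ℝ} (hM : 0 ≤ M) (w : ℝ) {u v : ℝ} (hu : |u| ≤ M) (hv : |v| ≤ M) :
    min w 0 * (u * v) ≤ M * (2 * min w 0 ^ 2 + min u 0 ^ 2 + min v 0 ^ 2) := by
  have h1 : min w 0 * (u * v) ≤ min w 0 * (M * (min u 0 + min v 0)) :=
    mul_le_mul_of_nonpos_left (prod_ge hM hu hv) (min_le_right w 0)
  have h2 := mul_le_mul_of_nonneg_left (min_mul_min_le_sq w u) hM
  have h3 := mul_le_mul_of_nonneg_left (min_mul_min_le_sq w v) hM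
  nlinarith [h1, h2, h3]

private lemma self_tri_bound {M u : ℝ} (w : ℝ) (hu : |u| ≤ M) :
    -(M * min w 0 ^ 2) ≤ min w 0 * (w * u) := by
  have h : min w 0 * (w * u) = (min w 0 * w) * u := by ring
  rw [h, neg_min_sq]
  have h1 := (abs_le.mp hu).1
  nlinarith [sq_nonneg (min w 0)]

private lemma sq_le_sumQ (v : Fin 7 → ℝ) (i : Fin 7) :
    min (v i) 0 ^ 2 ≤ ∑ l, min (v l) 0 ^ 2 :=
  Finset.single_le_sum (f := fun l => min (v l) 0 ^ 2) (fun l _ => sq_nonneg _)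
    (Finset.mem_univ i)

private lemma tri_boundQ {M : ℝ} (hM : 0 ≤ M) (v : Fin 7 → ℝ) (hv : ∀ i, |v i| ≤ M)
    (i j k : Fin 7) :
    min (v i) 0 * (v j * v k) ≤ 4 * (M * (∑ l, min (v l) 0 ^ 2)) := by
  have h := tri_bound hM (v i) (hv j) (hv k)
  have hi := mul_le_mul_of_nonneg_left (sq_le_sumQ v i) hM
  have hj := mul_le_mul_of_nonneg_left (sq_le_sumQ v j) hM
  have hk := mul_le_mul_of_nonneg_left (sq_le_sumQ v k) hM
  linarith

private lemma cross_boundQ (v : Fin 7 → ℝ) (i j : Fin 7) :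
    min (v i) 0 * v j ≤ 2 * (∑ l, min (v l) 0 ^ 2) := by
  have h := cross_bound (v i) (v j)
  have hi := sq_le_sumQ v i
  have hj := sq_le_sumQ v j
  linarith

private lemma self_tri_boundQ {M : ℝ} (hM : 0 ≤ M) (v : Fin 7 → ℝ) (hv : ∀ i, |v i| ≤ M)
    (i j : Fin 7) :
    -(M * (∑ l, min (v l) 0 ^ 2)) ≤ min (v i) 0 * (v i * v j) := by
  have h := self_tri_bound (v i) (hv j)
  have hi := mul_le_mul_of_nonneg_left (sq_le_sumQ v i) hM
  linarith

private lemma self_boundQ (c a : ℝ) (hc : 0 ≤ c) : -(c * (min a 0 * a)) ≤ 0 := by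
  rw [neg_min_sq]
  exact neg_nonpos_of_nonneg (mul_nonneg hc (sq_nonneg _))

private lemma field_dot_bound (lam dT ks kr p mu dI dL αs αr Ns Nr dV M : ℝ)
    (hlam : 0 ≤ lam) (hdT : 0 ≤ dT) (hks : 0 ≤ ks) (hkr : 0 ≤ kr)
    (hdI : 0 ≤ dI) (hdL : 0 ≤ dL) (hαs : 0 ≤ αs) (hαr : 0 ≤ αr)
    (hNs : 0 ≤ Ns) (hNr : 0 ≤ Nr) (hdV : 0 ≤ dV)
    (hp0 : 0 ≤ p) (hp1 : p ≤ 1) (hmu0 : 0 ≤ mu) (hmu1 : mu ≤ 1)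
    (hM : 0 ≤ M) (v : Fin 7 → ℝ) (hv : ∀ i, |v i| ≤ M) :
    (∑ i, 2 * min (v i) 0 * hivField lam dT ks kr p mu dI dL αs αr Ns Nr dV v i)
      ≤ (10 * M * (ks + kr) + 4 * (αs + αr + (Ns + Nr) * dI))
        * (∑ l, min (v l) 0 ^ 2) := by
  have hc1 : (0:ℝ) ≤ (1 - p) * (1 - mu) * ks :=
    mul_nonneg (mul_nonneg (by linarith) (by linarith)) hks
  have hc2 : (0:ℝ) ≤ p * (1 - mu) * ks := mul_nonneg (mul_nonneg hp0 (by linarith)) hks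
  have hc4a : (0:ℝ) ≤ (1 - p) * mu * ks := mul_nonneg (mul_nonneg (by linarith) hmu0) hks
  have hc4b : (0:ℝ) ≤ (1 - p) * kr := mul_nonneg (by linarith) hkr
  have hc5a : (0:ℝ) ≤ p * mu * ks := mul_nonneg (mul_nonneg hp0 hmu0) hks
  have hc5b : (0:ℝ) ≤ p * kr := mul_nonneg hp0 hkr
  rw [Fin.sum_univ_seven]
  have h0 : hivField lam dT ks kr p mu dI dL αs αr Ns Nr dV v 0
      = lam - dT * v 0 - ks * v 0 * v 3 - kr * v 0 * v 6 := rfl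
  have h1 : hivField lam dT ks kr p mu dI dL αs αr Ns Nr dV v 1
      = (1 - p) * (1 - mu) * ks * v 0 * v 3 + αs * v 2 - dI * v 1 := rfl
  have h2 : hivField lam dT ks kr p mu dI dL αs αr Ns Nr dV v 2
      = p * (1 - mu) * ks * v 0 * v 3 - (αs + dL) * v 2 := rfl
  have h3 : hivField lam dT ks kr p mu dI dL αs αr Ns Nr dV v 3
      = Ns * dI * v 1 - dV * v 3 := rfl
  have h4 : hivField lam dT ks kr p mu dI dL αs αr Ns Nr dV v 4
      = (1 - p) * mu * ks * v 0 * v 3 + (1 - p) * kr * v 0 * v 6 + αr * v 5 - dI * v 4 := rfl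
  have h5 : hivField lam dT ks kr p mu dI dL αs αr Ns Nr dV v 5
      = p * mu * ks * v 0 * v 3 + p * kr * v 0 * v 6 - (αr + dL) * v 5 := rfl
  have h6 : hivField lam dT ks kr p mu dI dL αs αr Ns Nr dV v 6
      = Nr * dI * v 4 - dV * v 6 := rfl
  rw [h0, h1, h2, h3, h4, h5, h6]
  -- component 0
  have L0 : min (v 0) 0 * lam ≤ 0 := mul_nonpos_of_nonpos_of_nonneg (min_le_right _ _) hlam
  have E0 : dT * (min (v 0) 0 * v 0) = dT * min (v 0) 0 ^ 2 := by rw [neg_min_sq]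
  have N0 : 0 ≤ dT * min (v 0) 0 ^ 2 := mul_nonneg hdT (sq_nonneg _)
  have A0s := mul_le_mul_of_nonneg_left (self_tri_boundQ hM v hv 0 3) hks
  have A0r := mul_le_mul_of_nonneg_left (self_tri_boundQ hM v hv 0 6) hkr
  -- component 1
  have T1 := mul_le_mul_of_nonneg_left (tri_boundQ hM v hv 1 0 3) hc1
  have C1 := mul_le_mul_of_nonneg_left (cross_boundQ v 1 2) hαs
  have E1 : dI * (min (v 1) 0 * v 1) = dI * min (v 1) 0 ^ 2 := by rw [neg_min_sq]
  have N1 : 0 ≤ dI * min (v 1) 0 ^ 2 := mul_nonneg hdI (sq_nonneg _)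
  -- component 2
  have T2 := mul_le_mul_of_nonneg_left (tri_boundQ hM v hv 2 0 3) hc2
  have E2 : (αs + dL) * (min (v 2) 0 * v 2) = (αs + dL) * min (v 2) 0 ^ 2 := by rw [neg_min_sq]
  have N2 : 0 ≤ (αs + dL) * min (v 2) 0 ^ 2 := mul_nonneg (by linarith) (sq_nonneg _)
  -- component 3
  have C3 := mul_le_mul_of_nonneg_left (cross_boundQ v 3 1) (mul_nonneg hNs hdI)
  have E3 : dV * (min (v 3) 0 * v 3) = dV * min (v 3) 0 ^ 2 := by rw [neg_min_sq]
  have N3 : 0 ≤ dV * min (v 3) 0 ^ 2 := mul_nonneg hdV (sq_nonneg _)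
  -- component 4
  have T4a := mul_le_mul_of_nonneg_left (tri_boundQ hM v hv 4 0 3) hc4a
  have T4b := mul_le_mul_of_nonneg_left (tri_boundQ hM v hv 4 0 6) hc4b
  have C4 := mul_le_mul_of_nonneg_left (cross_boundQ v 4 5) hαr
  have E4 : dI * (min (v 4) 0 * v 4) = dI * min (v 4) 0 ^ 2 := by rw [neg_min_sq]
  have N4 : 0 ≤ dI * min (v 4) 0 ^ 2 := mul_nonneg hdI (sq_nonneg _)
  -- component 5
  have T5a := mul_le_mul_of_nonneg_left (tri_boundQ hM v hv 5 0 3) hc5a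
  have T5b := mul_le_mul_of_nonneg_left (tri_boundQ hM v hv 5 0 6) hc5b
  have E5 : (αr + dL) * (min (v 5) 0 * v 5) = (αr + dL) * min (v 5) 0 ^ 2 := by rw [neg_min_sq]
  have N5 : 0 ≤ (αr + dL) * min (v 5) 0 ^ 2 := mul_nonneg (by linarith) (sq_nonneg _)
  -- component 6
  have C6 := mul_le_mul_of_nonneg_left (cross_boundQ v 6 4) (mul_nonneg hNr hdI)
  have E6 : dV * (min (v 6) 0 * v 6) = dV * min (v 6) 0 ^ 2 := by rw [neg_min_sq]
  have N6 : 0 ≤ dV * min (v 6) 0 ^ 2 := mul_nonneg hdV (sq_nonneg _)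
  simp only [Fin.sum_univ_seven] at A0s A0r T1 C1 T2 C3 T4a T4b C4 T5a T5b C6 ⊢
  linarith [L0, E0, N0, A0s, A0r, T1, C1, E1, N1, T2, E2, N2, C3, E3, N3,
    T4a, T4b, C4, E4, N4, T5a, T5b, E5, N5, C6, E6, N6]

private lemma hasDerivAt_negpart_sq (a : ℝ) :
    HasDerivAt (fun u : ℝ => min u 0 ^ 2) (2 * min a 0) a := by
  rcases lt_trichotomy a 0 with h | h | h
  · have hev : (fun u : ℝ => min u 0 ^ 2) =ᶠ[𝓝 a] fun u => u ^ 2 := by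
      filter_upwards [Iio_mem_nhds h] with u hu
      simp [min_eq_left (le_of_lt (mem_Iio.mp hu))]
    have h2 : HasDerivAt (fun u : ℝ => u ^ 2) (2 * a) a := by
      simpa using hasDerivAt_pow 2 a
    rw [min_eq_left h.le]
    exact h2.congr_of_eventuallyEq hev
  · subst h
    rw [hasDerivAt_iff_tendsto_slope]
    have hb : ∀ u : ℝ, ‖slope (fun u : ℝ => min u 0 ^ 2) 0 u‖ ≤ |u - 0| := by
      intro u
      rcases eq_or_ne u 0 with rfl | hu
      · simp [slope]
      · rw [slope_def_field]
        simp only [min_self, sub_zero]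
        rw [ne_eq] at hu
        have h1 : |min u 0 ^ 2 - 0 ^ 2| ≤ u ^ 2 := by
          rcases le_total u 0 with h | h
          · rw [min_eq_left h]; simp [abs_of_nonneg (sq_nonneg u)]
          · rw [min_eq_right h]; simp [sq_nonneg u]
        rw [Real.norm_eq_abs, abs_div]
        rw [div_le_iff₀ (abs_pos.mpr hu)]
        calc |min u 0 ^ 2 - 0 ^ 2| ≤ u ^ 2 := h1
          _ = |u| * |u| := by rw [← sq_abs, sq]
    have : (2 : ℝ) * min 0 0 = 0 := by simp
    rw [this]
    apply squeeze_zero_norm hb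
    have : Filter.Tendsto (fun u : ℝ => |u - 0|) (𝓝 0) (𝓝 0) := by
      have hc : Continuous fun u : ℝ => |u - 0| := continuous_abs.comp (continuous_id.sub continuous_const)
      simpa using hc.tendsto 0
    exact this.mono_left nhdsWithin_le_nhds
  · have hev : (fun u : ℝ => min u 0 ^ 2) =ᶠ[𝓝 a] fun _ => (0:ℝ) ^ 2 := by
      filter_upwards [Ioi_mem_nhds h] with u hu
      simp [min_eq_right (le_of_lt (mem_Ioi.mp hu))]
    have h2 : HasDerivAt (fun _ : ℝ => (0:ℝ) ^ 2) 0 a := hasDerivAt_const _ _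
    rw [min_eq_right h.le]
    simpa using h2.congr_of_eventuallyEq hev


/-- Forward invariance of the nonnegative orthant for (7CM). -/
theorem nonneg_orthant_forward_invariant
    (lam dT ks kr p mu dI dL αs αr Ns Nr dV : ℝ)
    (hlam : 0 < lam) (hdT : 0 < dT) (hks : 0 < ks) (hkr : 0 < kr)
    (hdI : 0 < dI) (hdL : 0 < dL) (hαs : 0 < αs) (hαr : 0 < αr)
    (hNs : 0 < Ns) (hNr : 0 < Nr) (hdV : 0 < dV)
    (hp : p ∈ Set.Ioo (0 : ℝ) 1) (hmu : mu ∈ Set.Ioo (0 : ℝ) 1)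
    (τ : ℝ) (hτ : 0 < τ)
    (x : ℝ → Fin 7 → ℝ)
    (hx : ∀ t ∈ Set.Icc (0 : ℝ) τ,
      HasDerivAt x (hivField lam dT ks kr p mu dI dL αs αr Ns Nr dV (x t)) t)
    (h0 : ∀ i, 0 ≤ x 0 i) :
    ∀ t ∈ Set.Icc (0 : ℝ) τ, ∀ i, 0 ≤ x t i := by
  obtain ⟨hp0, hp1⟩ := hp
  obtain ⟨hmu0, hmu1⟩ := hmu
  have hcont : ContinuousOn x (Set.Icc 0 τ) := fun t ht =>
    (hx t ht).continuousAt.continuousWithinAt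
  obtain ⟨M, hMbd⟩ := isCompact_Icc.exists_bound_of_continuousOn hcont
  have h0mem : (0:ℝ) ∈ Set.Icc (0:ℝ) τ := ⟨le_refl _, hτ.le⟩
  have hM0 : 0 ≤ M := le_trans (norm_nonneg _) (hMbd 0 h0mem)
  have hvM : ∀ t ∈ Set.Icc (0:ℝ) τ, ∀ i, |x t i| ≤ M := by
    intro t ht i
    calc |x t i| = ‖x t i‖ := (Real.norm_eq_abs _).symm
      _ ≤ ‖x t‖ := norm_le_pi_norm (x t) i
      _ ≤ M := hMbd t ht
  set K : ℝ := 10 * M * (ks + kr) + 4 * (αs + αr + (Ns + Nr) * dI) with hK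
  set q : ℝ → ℝ := fun t => ∑ i, min (x t i) 0 ^ 2 with hq
  set q' : ℝ → ℝ := fun t =>
    ∑ i, 2 * min (x t i) 0 * hivField lam dT ks kr p mu dI dL αs αr Ns Nr dV (x t) i with hq'
  have hqderiv : ∀ t ∈ Set.Icc (0:ℝ) τ, HasDerivAt q (q' t) t := by
    intro t ht
    have hcomp : ∀ i, HasDerivAt (fun s => x s i)
        (hivField lam dT ks kr p mu dI dL αs αr Ns Nr dV (x t) i) t :=
      fun i => hasDerivAt_pi.mp (hx t ht) i
    have hterm : ∀ i : Fin 7, HasDerivAt (fun s => min (x s i) 0 ^ 2)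
        (2 * min (x t i) 0 * hivField lam dT ks kr p mu dI dL αs αr Ns Nr dV (x t) i) t := by
      intro i
      have := (hasDerivAt_negpart_sq (x t i)).comp t (hcomp i)
      simpa [Function.comp_def, mul_assoc] using this
    exact HasDerivAt.fun_sum (fun i _ => hterm i)
  have hqcont : ContinuousOn q (Set.Icc 0 τ) := fun t ht =>
    (hqderiv t ht).continuousAt.continuousWithinAt
  have hbound : ∀ t ∈ Set.Ico (0:ℝ) τ, q' t ≤ K * q t + 0 := by
    intro t ht
    rw [add_zero, hK, hq, hq']
    exact field_dot_bound lam dT ks kr p mu dI dL αs αr Ns Nr dV M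
      hlam.le hdT.le hks.le hkr.le hdI.le hdL.le hαs.le hαr.le hNs.le hNr.le hdV.le
      hp0.le hp1.le hmu0.le hmu1.le hM0 (x t) (hvM t (Set.Ico_subset_Icc_self ht))
  have hq0 : q 0 ≤ 0 := by
    rw [hq]
    have : ∀ i : Fin 7, min (x 0 i) 0 ^ 2 = 0 := by
      intro i
      rw [min_eq_right (h0 i)]
      ring
    simp [this]
  have hf' : ∀ t ∈ Set.Ico (0:ℝ) τ, ∀ r, q' t < r →
      ∃ᶠ z in 𝓝[>] t, (z - t)⁻¹ * (q z - q t) < r := by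
    intro t ht r hr
    have hder : HasDerivWithinAt q (q' t) (Set.Ici t) t :=
      (hqderiv t (Set.Ico_subset_Icc_self ht)).hasDerivWithinAt
    have := hder.liminf_right_slope_le hr
    refine this.mono fun z hz => ?_
    rwa [slope_def_field, div_eq_inv_mul] at hz
  have hmain := le_gronwallBound_of_liminf_deriv_right_le hqcont hf' hq0 hbound
  intro t ht i
  have hqt : q t ≤ 0 := by
    have := hmain t ht
    rwa [gronwallBound_ε0_δ0] at this
  have hsum : (0:ℝ) ≤ q t := Finset.sum_nonneg fun l _ => sq_nonneg _
  have hzero : min (x t i) 0 ^ 2 = 0 := by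
    have hle : min (x t i) 0 ^ 2 ≤ q t := sq_le_sumQ (x t) i
    nlinarith [sq_nonneg (min (x t i) 0)]
  have : min (x t i) 0 = 0 := by
    have := pow_eq_zero_iff (n := 2) (by norm_num) |>.mp hzero
    exact this
  calc (0:ℝ) = min (x t i) 0 := this.symm
    _ ≤ x t i := min_le_left _ _
end
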